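/- arXiv:2406.05110 — 8 statements merged into one kernel-verified Lean document; each statement's English description precedes it below -/
import Mathlib

section
/- For positive integers n and k, the number of submultisets of {0,1,...,n-1} of size k that sum to 0 modulo n equals (1/n) * sum over common divisors d of k and n of binomial((n+k)/d - 1, k/d) * φ(d). -/
open Finset Filter Topology

noncomputable section

/-- number of size-`k` submultisets of `{0,…,n-1}` whose sum is ≡ 0 mod `n` -/
def symCount (n k : ℕ) : ℕ :=
  Nat.card {s : Sym (Fin n) k // ((s : Multiset (Fin n)).map Fin.val).sum % n = 0}

/-- `T n`: number of size-`n` submultisets of `{0,…,n-1}` summing to `0` mod `n`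
(= number of rooted unlabelled cyclically distinct plane trees with `n` edges). -/
def planeTreeT (n : ℕ) : ℕ := symCount n n

/-- Walkup's formula expression `(1/n) ∑_{d ∣ n} C(2d-1, d) φ(n/d)` (exact division). -/
def walkupT (n : ℕ) : ℕ :=
  (∑ d ∈ n.divisors, Nat.choose (2 * d - 1) d * Nat.totient (n / d)) / n

/-- number of up-steps strictly before position `i` in a monotone lattice path
encoded by `f : Fin m → Bool` (`true` = up-step, `false` = right-step). -/
def upsBefore {m : ℕ} (f : Fin m → Bool) (i : Fin m) : ℕ :=
  Nat.card {j : Fin m // j < i ∧ f j = true}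

/-- area below/right of a monotone lattice path: sum over right-steps of the
number of up-steps before them. -/
def pathArea {m : ℕ} (f : Fin m → Bool) : ℕ :=
  ∑ i : Fin m, if f i = false then upsBefore f i else 0

/-- number of up-steps of a monotone lattice path. -/
def upCount {m : ℕ} (f : Fin m → Bool) : ℕ := Nat.card {i : Fin m // f i = true}

/-- the `m`-th increment (`±1`) of a walk of length `2n` encoded by
`ε : Fin (2n) → Bool` (`true` = `+1`); `0` out of range. -/
def stepVal (n : ℕ) (ε : Fin (2 * n) → Bool) (m : ℕ) : ℤ :=
  if h : m < 2 * n then (if ε ⟨m, h⟩ then 1 else -1) else 0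

/-- position of the walk after `k` steps. -/
def wpos (n : ℕ) (ε : Fin (2 * n) → Bool) (k : ℕ) : ℤ :=
  ∑ i ∈ Finset.range k, stepVal n ε i

/-- a walk of length `2n` is a bridge if it returns to `0`. -/
def IsBridge (n : ℕ) (ε : Fin (2 * n) → Bool) : Prop := wpos n ε (2 * n) = 0

/-- partial diamond area `σ_{2k} = (1/2) ∑_{i=1}^k B_{2i}` (the division is exact). -/
def psig (n : ℕ) (ε : Fin (2 * n) → Bool) (k : ℕ) : ℤ :=
  (∑ i ∈ Finset.range k, wpos n ε (2 * (i + 1))) / 2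

/-- diamond area `σ(B) = (1/2) ∑_{i=1}^n B_{2i}`. -/
def dsigma (n : ℕ) (ε : Fin (2 * n) → Bool) : ℤ := psig n ε n

/-- a bridge is graphical if `σ(B) = 0` and `σ_{2k} ≥ 0` for all `1 ≤ k < n`. -/
def IsGraphical (n : ℕ) (ε : Fin (2 * n) → Bool) : Prop :=
  IsBridge n ε ∧ dsigma n ε = 0 ∧ ∀ k, 1 ≤ k → k < n → 0 ≤ psig n ε k

/-- `B_n`: the number of graphical bridges of length `2n`. -/
def graphicalCount (n : ℕ) : ℕ := Nat.card {ε : Fin (2 * n) → Bool // IsGraphical n ε}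

/-! The roots-of-unity filter with a primitive `n`-th root of unity `ζ` turns `n · symCount n k`
into `∑_{c < n} ∑_s (ζ^c)^{Σ s}`. For fixed `c`, `ω = ζ^c` is a primitive `d`-th root of unity,
`d = n / gcd(n, c)`, and `∑_s ω^{Σ s}` is the coefficient of `X^k` in
`∏_{j < n} (1 - ω^j X)⁻¹ = (1 - X^d)^{-n/d}`, namely `C(n/d + k/d - 1, k/d)` if `d ∣ k` and `0`
otherwise. Exactly `φ(d)` residues `c < n` give the same `d`. -/

open PowerSeries

theorem PowerSeries.coeff_prod_mk_pow_eq_sum_sym {R σ : Type*} [CommSemiring R] [Fintype σ]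
    [DecidableEq σ] (x : σ → R) (k : ℕ) :
    coeff k (∏ i, mk fun a => x i ^ a) = ∑ s : Sym σ k, ((s : Multiset σ).map x).prod := by
  rw [coeff_prod]
  symm
  refine sum_bij (fun s _ => Multiset.toFinsupp (s : Multiset σ)) ?_ ?_ ?_ ?_
  · intro s _
    rw [mem_finsuppAntidiag]
    refine ⟨?_, subset_univ _⟩
    change ∑ a, Multiset.count a (s : Multiset σ) = k
    rw [Multiset.sum_count_eq_card fun a _ => mem_univ a]
    exact s.2
  · intro s _ t _ h
    exact Sym.coe_injective (Multiset.toFinsupp.injective h)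
  · intro P hP
    rw [mem_finsuppAntidiag] at hP
    refine ⟨⟨Finsupp.toMultiset P, ?_⟩, mem_univ _, Finsupp.toMultiset_toFinsupp P⟩
    rw [Finsupp.card_toMultiset, Finsupp.sum_fintype _ _ fun _ => rfl]
    exact hP.1
  · intro s _
    simp only [coeff_mk, Multiset.toFinsupp_apply]
    rw [prod_multiset_map_count]
    exact prod_subset (subset_univ _) fun i _ hi => by
      rw [Multiset.count_eq_zero.2 (by simpa using hi), pow_zero]

theorem PowerSeries.mk_pow_mul_one_sub_C_mul_X {R : Type*} [CommRing R] (u : R) :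
    (mk fun a => u ^ a) * (1 - C u * X) = 1 := by
  simpa [rescale_mk, rescale_X] using congrArg (rescale u) (mk_one_mul_one_sub_eq_one R)

namespace IsPrimitiveRoot

variable {R : Type*} [CommRing R] [IsDomain R] {ω : R} {d n : ℕ}

theorem prod_range_one_sub_pow_mul (hω : IsPrimitiveRoot ω d) (hd : 0 < d) (x : R) :
    ∏ j ∈ range d, (1 - ω ^ j * x) = 1 - x ^ d := by
  have : NeZero d := ⟨hd.ne'⟩
  have hprod := hω.pow_sub_pow_eq_prod_sub_mul 1 x hd
  rw [one_pow] at hprod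
  rw [hprod]
  refine prod_nbij (ω ^ ·) ?_ ?_ ?_ fun _ _ => rfl
  · intro j _
    rw [Polynomial.mem_nthRootsFinset hd, pow_right_comm, hω.pow_eq_one, one_pow]
  · intro i hi j hj h
    exact hω.pow_inj (mem_range.1 hi) (mem_range.1 hj) h
  · intro ξ hξ
    obtain ⟨i, hi, rfl⟩ := hω.eq_pow_of_pow_eq_one ((Polynomial.mem_nthRootsFinset hd 1).1 hξ)
    exact ⟨i, mem_range.2 hi, rfl⟩

theorem prod_range_one_sub_pow_mul_of_dvd (hω : IsPrimitiveRoot ω d) (hd : 0 < d) (hdn : d ∣ n)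
    (x : R) :
    ∏ j ∈ range n, (1 - ω ^ j * x) = (1 - x ^ d) ^ (n / d) := by
  obtain ⟨m, rfl⟩ := hdn
  rw [Nat.mul_div_cancel_left _ hd]
  induction m with
  | zero => simp
  | succ m ih =>
    rw [Nat.mul_succ, prod_range_add, ih, pow_succ, ← hω.prod_range_one_sub_pow_mul hd]
    congr 1
    refine prod_congr rfl fun j _ => ?_
    rw [pow_add, pow_mul, hω.pow_eq_one, one_pow, one_mul]

theorem coeff_prod_range_mk_pow (hω : IsPrimitiveRoot ω d) (hn : 0 < n) (hdn : d ∣ n) (k : ℕ) :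
    coeff k (∏ j ∈ range n, PowerSeries.mk fun a => (ω ^ j) ^ a) =
      if d ∣ k then (((n + k) / d - 1).choose (k / d) : R) else 0 := by
  have hd : 0 < d := Nat.pos_of_dvd_of_pos hdn hn
  have hm : 0 < n / d := Nat.div_pos (Nat.le_of_dvd hn hdn) hd
  set F : R⟦X⟧ := ∏ j ∈ range n, PowerSeries.mk fun a => (ω ^ j) ^ a
  set G : R⟦X⟧ := expand d hd.ne' (invOneSubPow R (n / d)).val
  have hF : F * (1 - X ^ d) ^ (n / d) = 1 := by
    have hCω : IsPrimitiveRoot (C ω : R⟦X⟧) d := hω.map_of_injective (C_injective (R := R))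
    rw [← hCω.prod_range_one_sub_pow_mul_of_dvd hd hdn, ← prod_mul_distrib]
    exact prod_eq_one fun j _ => by rw [← map_pow, mk_pow_mul_one_sub_C_mul_X]
  have hG : (1 - X ^ d) ^ (n / d) * G = 1 := by
    rw [← expand_X d hd.ne', ← map_one (expand d hd.ne'), ← map_sub, ← map_pow, ← map_mul,
      ← invOneSubPow_inv_eq_one_sub_pow, Units.inv_val, map_one]
  rw [left_inv_eq_right_inv hF hG, coeff_expand]
  split_ifs with hk
  · obtain ⟨q, rfl⟩ := hk
    obtain ⟨m, rfl⟩ := hdn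
    rw [invOneSubPow_val_eq_mk_sub_one_add_choose_of_pos _ _ hm, coeff_mk, ← mul_add]
    simp only [Nat.mul_div_cancel_left _ hd] at hm ⊢
    rw [show m + q - 1 = m - 1 + q by omega, Nat.choose_symm_add]
  · rfl

theorem sum_sym_pow_sum_val (hω : IsPrimitiveRoot ω d) (hn : 0 < n) (hdn : d ∣ n) (k : ℕ) :
    ∑ s : Sym (Fin n) k, ω ^ ((s : Multiset (Fin n)).map Fin.val).sum =
      if d ∣ k then (((n + k) / d - 1).choose (k / d) : R) else 0 := by
  rw [← hω.coeff_prod_range_mk_pow hn hdn, ← Fin.prod_univ_eq_prod_range,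
    coeff_prod_mk_pow_eq_sum_sym]
  refine sum_congr rfl fun s _ => ?_
  induction (s : Multiset (Fin n)) using Multiset.induction_on with
  | empty => simp
  | cons a t ih => simp [pow_add, ih]

theorem sum_range_pow_pow (hω : IsPrimitiveRoot ω n) (m : ℕ) :
    ∑ c ∈ range n, (ω ^ m) ^ c = if n ∣ m then (n : R) else 0 := by
  split_ifs with hm
  · simp [(hω.pow_eq_one_iff_dvd m).2 hm]
  · have hne : ω ^ m - 1 ≠ 0 := sub_ne_zero.2 fun h => hm ((hω.pow_eq_one_iff_dvd m).1 h)
    have hgeom := geom_sum_mul (ω ^ m) n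
    rw [pow_right_comm, hω.pow_eq_one, one_pow, sub_self] at hgeom
    exact (mul_eq_zero.1 hgeom).resolve_right hne

end IsPrimitiveRoot

theorem IsPrimitiveRoot.pow_div_gcd {M : Type*} [CommMonoid M] {ζ : M} {n : ℕ}
    (hζ : IsPrimitiveRoot ζ n) (hn : 0 < n) (c : ℕ) : IsPrimitiveRoot (ζ ^ c) (n / n.gcd c) := by
  rcases Nat.eq_zero_or_pos c with rfl | hc
  · simp [Nat.div_self hn]
  rw [IsPrimitiveRoot.iff_orderOf, orderOf_pow' _ hc.ne', hζ.eq_orderOf]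

theorem Nat.sum_range_comp_div_gcd {M : Type*} [AddCommMonoid M] {n : ℕ} (hn : 0 < n)
    (f : ℕ → M) :
    ∑ c ∈ range n, f (n / n.gcd c) = ∑ d ∈ n.divisors, d.totient • f d := by
  rw [← Nat.sum_div_divisors n, ← sum_fiberwise_of_maps_to (g := n.gcd)
    fun c _ => Nat.mem_divisors.2 ⟨Nat.gcd_dvd_left n c, hn.ne'⟩]
  refine sum_congr rfl fun e he => ?_
  rw [Nat.totient_div_of_dvd (Nat.dvd_of_mem_divisors he), ← sum_const]
  exact sum_congr rfl fun c hc => by rw [(mem_filter.1 hc).2]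

theorem von_sterneck_general (n k : ℕ) (hn : 0 < n) :
    n * symCount n k =
      ∑ d ∈ (Nat.gcd k n).divisors,
        Nat.choose ((n + k) / d - 1) (k / d) * Nat.totient d := by
  have hζ : IsPrimitiveRoot (Complex.exp (2 * Real.pi * Complex.I / n)) n :=
    Complex.isPrimitiveRoot_exp n hn.ne'
  set ζ := Complex.exp (2 * Real.pi * Complex.I / n)
  set σ : Sym (Fin n) k → ℕ := fun s => ((s : Multiset (Fin n)).map Fin.val).sum
  set g : ℕ → ℂ := fun d => if d ∣ k then (((n + k) / d - 1).choose (k / d) : ℂ) else 0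
  have hcount : symCount n k = #{s : Sym (Fin n) k | n ∣ σ s} := by
    simp [symCount, σ, Nat.card_eq_fintype_card, Fintype.card_subtype, Nat.dvd_iff_mod_eq_zero]
  apply Nat.cast_injective (R := ℂ)
  calc ((n * symCount n k : ℕ) : ℂ)
      = ∑ s : Sym (Fin n) k, ∑ c ∈ range n, (ζ ^ σ s) ^ c := by
        simp [hζ.sum_range_pow_pow, hcount, sum_ite, mul_comm]
    _ = ∑ c ∈ range n, ∑ s : Sym (Fin n) k, (ζ ^ c) ^ σ s := by
        rw [sum_comm]
        exact sum_congr rfl fun c _ => sum_congr rfl fun s _ => pow_right_comm _ _ _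
    _ = ∑ c ∈ range n, g (n / n.gcd c) :=
        sum_congr rfl fun c _ =>
          (hζ.pow_div_gcd hn c).sum_sym_pow_sum_val hn
            (Nat.div_dvd_of_dvd (Nat.gcd_dvd_left n c)) k
    _ = ∑ d ∈ n.divisors, d.totient • g d := Nat.sum_range_comp_div_gcd hn g
    _ = _ := by
        rw [← Nat.divisors_filter_dvd_of_dvd hn.ne' (Nat.gcd_dvd_right k n), sum_filter]
        push_cast
        refine sum_congr rfl fun d hd => ?_
        simp [g, Nat.dvd_gcd_iff, Nat.dvd_of_mem_divisors hd, mul_comm]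

theorem von_sterneck (n k : ℕ) (hn : 0 < n) (hk : 0 < k) :
    n * symCount n k =
      ∑ d ∈ (Nat.gcd k n).divisors,
        Nat.choose ((n + k) / d - 1) (k / d) * Nat.totient d :=
  von_sterneck_general n k hn
end
end

section
/- The number of monotone lattice paths from (0,0) to (n,n) (using unit up-steps and right-steps) whose enclosed area α(L) is congruent to 0 mod n equals 2·T_n, where T_n is the number of submultisets of {0,1,...,n-1} of size n summing to 0 mod n. -/
open Finset Filter Topology

noncomputable section

/-!
Split the paths by their last step. A final up-step can be dropped without changing the area,
leaving a path with `n - 1` up-steps and `n` right-steps. A final right-step adds `n` to the area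
and leaves a path with `n` up-steps and `n - 1` right-steps; exchanging up- and right-steps turns
it into a path of the first kind and replaces its area `α` by `n (n - 1) - α`, so the two halves
are equinumerous. Finally, a path with `a` right-steps and `b` up-steps is the same as the
multiset `{u_1, …, u_a}` of heights of its right-steps, a size-`a` submultiset of `{0, …, b}`,
and its area is `u_1 + ⋯ + u_a`; for `a = n`, `b = n - 1` these are the multisets counted by
`T_n`.
-/

namespace Sym

variable {α : Type*} [LinearOrder α]

def equivOrderHom (k : ℕ) : Sym α k ≃ (Fin k →o α) where
  toFun s := ⟨fun i => (s.1.sort).get (i.cast (by simp)),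
    fun _ _ hij => (Multiset.pairwise_sort _ _).rel_get_of_le hij⟩
  invFun u := ⟨List.ofFn u, by simp⟩
  left_inv s := by
    ext1
    change ((List.ofFn _ : List α) : Multiset α) = (s : Multiset α)
    conv_rhs => rw [← Multiset.sort_eq (s : Multiset α) (· ≤ ·)]
    congr 1
    exact List.ext_get (by simp) fun _ _ _ => by
      simp only [val_eq_coe, List.get_eq_getElem, List.getElem_ofFn]; rfl
  right_inv u := by
    ext i
    have hsort : (List.ofFn u).mergeSort (fun a b => decide (a ≤ b)) = List.ofFn u :=
      List.mergeSort_eq_self _ (List.pairwise_ofFn.mpr fun _ _ h => by simpa using u.monotone h.le)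
    simp only [Multiset.coe_sort, List.get_eq_getElem, hsort, List.getElem_ofFn, OrderHom.coe_mk]
    rfl

theorem coe_eq_ofFn_equivOrderHom {k : ℕ} (s : Sym α k) :
    (s : Multiset α) = ↑(List.ofFn (equivOrderHom k s)) :=
  congrArg Subtype.val ((equivOrderHom k).symm_apply_apply s).symm

end Sym

theorem Finset.sum_card_filter_lt {α : Type*} [LinearOrder α] (s : Finset α) :
    ∑ i ∈ s, #{j ∈ s | j < i} = (#s).choose 2 := by
  induction s using Finset.induction_on_max with
  | empty => simp
  | insert a s ha ih =>
    have ha' : a ∉ s := fun h => lt_irrefl a (ha a h)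
    have hfilter : ∀ i ∈ s, {j ∈ insert a s | j < i} = {j ∈ s | j < i} := fun i hi => by
      rw [Finset.filter_insert, if_neg (ha i hi).not_gt]
    rw [Finset.sum_insert ha', Finset.sum_congr rfl fun i hi => by rw [hfilter i hi], ih,
      Finset.filter_insert, if_neg (lt_irrefl a), Finset.filter_true_of_mem ha,
      Finset.card_insert_of_notMem ha', Nat.choose_succ_succ', Nat.choose_one_right]

namespace Fin

theorem val_add_sub_le_of_strictMono {a m : ℕ} {g : Fin a → Fin m} (hg : StrictMono g)
    {i j : Fin a} (hij : i ≤ j) : (g i : ℕ) + (j - i) ≤ g j := by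
  obtain ⟨d, hd⟩ := Nat.exists_eq_add_of_le (Fin.le_def.1 hij)
  induction d generalizing j with
  | zero => obtain rfl : i = j := Fin.ext (by omega); simp
  | succ d ih =>
    have hj' : (i : ℕ) + d < a := by omega
    have h1 := ih (j := ⟨i + d, hj'⟩) (Fin.le_def.2 (by simp)) rfl
    have h2 := Fin.lt_def.1 (hg (show (⟨i + d, hj'⟩ : Fin a) < j from
      Fin.lt_def.2 (by simp; omega)))
    simp only at h1
    omega

theorem le_val_of_strictMono {a m : ℕ} {g : Fin a → Fin m} (hg : StrictMono g) (i : Fin a) :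
    (i : ℕ) ≤ g i := by
  have := val_add_sub_le_of_strictMono hg (i := ⟨0, i.pos⟩) (j := i) (Fin.le_def.2 (by simp))
  simp only [tsub_zero] at this
  omega

def orderHomEquivOrderEmbedding (a b : ℕ) :
    (Fin a →o Fin (b + 1)) ≃ (Fin a ↪o Fin (a + b)) where
  toFun u := OrderEmbedding.ofStrictMono (fun i => ⟨u i + i, by have := (u i).isLt; omega⟩)
    fun i j hij => by
      have := u.monotone hij.le
      simp only [Fin.lt_def, Fin.le_def] at hij this ⊢
      omega
  invFun g := ⟨fun i => ⟨g i - i, by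
      have ha : a - 1 < a := by have := i.isLt; omega
      have := val_add_sub_le_of_strictMono g.strictMono (j := ⟨a - 1, ha⟩)
        (Fin.le_def.2 (show (i : ℕ) ≤ a - 1 by omega))
      have := (g ⟨a - 1, ha⟩).isLt
      simp only at *
      omega⟩,
    fun i j hij => by
      have := val_add_sub_le_of_strictMono g.strictMono hij
      have := le_val_of_strictMono g.strictMono i
      simp only [Fin.le_def] at hij ⊢
      omega⟩
  left_inv u := by ext i; exact Nat.add_sub_cancel _ _
  right_inv g := by
    ext i
    exact Nat.sub_add_cancel (le_val_of_strictMono g.strictMono i)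

theorem sum_univ_val (a : ℕ) : ∑ i : Fin a, (i : ℕ) = a.choose 2 := by
  rw [Fin.sum_univ_eq_sum_range (fun i => i), Finset.sum_range_id, Nat.choose_two_right]

theorem card_subtype_snoc {m : ℕ} (P : (Fin (m + 1) → Bool) → Prop) :
    Nat.card {f // P f} =
      Nat.card {g : Fin m → Bool // P (snoc g true)} +
        Nat.card {g : Fin m → Bool // P (snoc g false)} := by
  calc Nat.card {f // P f}
      = Nat.card {p : Bool × (Fin m → Bool) // P (snoc p.2 p.1)} :=
        Nat.card_congr ((snocEquiv fun _ => Bool).subtypeEquiv fun _ => Iff.rfl).symm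
    _ = Nat.card (Σ x, {g : Fin m → Bool // P (snoc g x)}) :=
        Nat.card_congr (Equiv.subtypeProdEquivSigmaSubtype fun x g => P (snoc g x))
    _ = _ := by rw [Nat.card_sigma, Fintype.sum_bool]

end Fin

section Paths

variable {m : ℕ}

theorem upCount_eq_sum (f : Fin m → Bool) : upCount f = ∑ i, if f i = true then 1 else 0 := by
  rw [upCount, Nat.card_eq_fintype_card, Fintype.card_subtype, Finset.card_filter]

theorem upsBefore_eq_sum (f : Fin m → Bool) (i : Fin m) :
    upsBefore f i = ∑ j, if j < i ∧ f j = true then 1 else 0 := by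
  rw [upsBefore, Nat.card_eq_fintype_card, Fintype.card_subtype, Finset.card_filter]

theorem upCount_snoc (g : Fin m → Bool) (x : Bool) :
    upCount (Fin.snoc g x : Fin (m + 1) → Bool) = upCount g + x.toNat := by
  rw [upCount_eq_sum, upCount_eq_sum, Fin.sum_univ_castSucc]
  cases x <;> simp

theorem upCount_add_upCount_not (f : Fin m → Bool) : upCount f + upCount (fun i => !f i) = m := by
  rw [upCount_eq_sum, upCount_eq_sum, ← Finset.sum_add_distrib]
  trans ∑ _ : Fin m, 1
  · exact Finset.sum_congr rfl fun i _ => by cases f i <;> rfl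
  · simp

theorem upsBefore_snoc_castSucc (g : Fin m → Bool) (x : Bool) (i : Fin m) :
    upsBefore (Fin.snoc g x : Fin (m + 1) → Bool) i.castSucc = upsBefore g i := by
  rw [upsBefore_eq_sum, upsBefore_eq_sum, Fin.sum_univ_castSucc]
  simp [(Fin.castSucc_lt_last i).not_gt]

theorem upsBefore_snoc_last (g : Fin m → Bool) (x : Bool) :
    upsBefore (Fin.snoc g x : Fin (m + 1) → Bool) (Fin.last m) = upCount g := by
  rw [upsBefore_eq_sum, upCount_eq_sum, Fin.sum_univ_castSucc]
  simp [Fin.castSucc_lt_last]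

theorem pathArea_snoc (g : Fin m → Bool) (x : Bool) :
    pathArea (Fin.snoc g x : Fin (m + 1) → Bool) = pathArea g + if x then 0 else upCount g := by
  cases x <;> simp [pathArea, Fin.sum_univ_castSucc, upsBefore_snoc_castSucc, upsBefore_snoc_last]

theorem pathArea_add_pathArea_not (f : Fin m → Bool) :
    pathArea f + pathArea (fun i => !f i) = upCount f * upCount (fun i => !f i) := by
  induction f using Fin.snocInduction with
  | elim0 => simp [pathArea, upCount_eq_sum]
  | snoc g x ih =>
    have hnot : (fun i => !(Fin.snoc g x : Fin (_ + 1) → Bool) i) = Fin.snoc (fun i => !g i) !x :=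
      Fin.comp_snoc not g x
    rw [hnot, pathArea_snoc, pathArea_snoc, upCount_snoc, upCount_snoc]
    cases x <;> simp [Nat.mul_succ, Nat.succ_mul] <;> omega

def rightSteps (f : Fin m → Bool) : Finset (Fin m) := {i | f i = false}

theorem card_rightSteps_add_upCount (f : Fin m → Bool) : #(rightSteps f) + upCount f = m := by
  have hsteps : #(rightSteps f) = upCount (fun i => !f i) := by
    rw [upCount, Nat.card_eq_fintype_card, Fintype.card_subtype, rightSteps]
    simp
  have := upCount_add_upCount_not f
  omega

theorem val_eq_upsBefore_add_card (f : Fin m → Bool) (i : Fin m) :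
    (i : ℕ) = upsBefore f i + #{j ∈ rightSteps f | j < i} := by
  rw [upsBefore_eq_sum, rightSteps, Finset.filter_filter, Finset.card_filter,
    ← Finset.sum_add_distrib, ← Fin.card_Iio, ← Finset.filter_gt_eq_Iio, Finset.card_filter]
  refine Finset.sum_congr rfl fun j _ => ?_
  by_cases hj : j < i <;> cases f j <;> simp [hj]

theorem pathArea_eq_sum_rightSteps (f : Fin m → Bool) :
    pathArea f = ∑ i ∈ rightSteps f, upsBefore f i :=
  (Finset.sum_filter _ _).symm

theorem sum_rightSteps_val (f : Fin m → Bool) :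
    ∑ i ∈ rightSteps f, (i : ℕ) = pathArea f + (#(rightSteps f)).choose 2 := by
  rw [← Finset.sum_card_filter_lt, pathArea_eq_sum_rightSteps, ← Finset.sum_add_distrib]
  exact Finset.sum_congr rfl fun i _ => val_eq_upsBefore_add_card f i

theorem rightSteps_decide_notMem (S : Finset (Fin m)) :
    rightSteps (fun i => decide (i ∉ S)) = S := by
  ext i
  simp [rightSteps]

def rightStepsEquiv {a b : ℕ} (h : a + b = m) :
    {f : Fin m → Bool // upCount f = b} ≃ Set.powersetCard (Fin m) a where
  toFun f := ⟨rightSteps f, by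
    have := card_rightSteps_add_upCount f.1
    rw [Set.powersetCard.mem_iff]
    omega⟩
  invFun S := ⟨fun i => decide (i ∉ S.1), by
    have := card_rightSteps_add_upCount fun i => decide (i ∉ S.1)
    rw [rightSteps_decide_notMem, S.2] at this
    omega⟩
  left_inv f := by
    ext i
    cases hf : f.1 i <;> simp [rightSteps, hf]
  right_inv S := Subtype.ext (rightSteps_decide_notMem S.1)

end Paths

def symEquivPaths (a b : ℕ) :
    Sym (Fin (b + 1)) a ≃ {f : Fin (a + b) → Bool // upCount f = b} :=
  (Sym.equivOrderHom a).trans <| (Fin.orderHomEquivOrderEmbedding a b).trans <|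
    Set.powersetCard.ofFinEmbEquiv.trans (rightStepsEquiv rfl).symm

theorem pathArea_symEquivPaths {a b : ℕ} (s : Sym (Fin (b + 1)) a) :
    pathArea (symEquivPaths a b s).1 = ((s : Multiset (Fin (b + 1))).map Fin.val).sum := by
  set u := Sym.equivOrderHom a s
  set g := Fin.orderHomEquivOrderEmbedding a b u
  have hsteps : rightSteps (symEquivPaths a b s).1 = univ.map g.toEmbedding := by
    change (rightStepsEquiv rfl ((rightStepsEquiv rfl).symm _)).1 = _
    rw [Equiv.apply_symm_apply]
    exact Set.powersetCard.val_ofFinEmb _ _ _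
  have harea := sum_rightSteps_val (symEquivPaths a b s).1
  rw [hsteps, Finset.card_map, Finset.card_univ, Fintype.card_fin, Finset.sum_map] at harea
  have hg : ∑ i, (g.toEmbedding i : ℕ) = ∑ i, (u i : ℕ) + a.choose 2 := by
    rw [← Fin.sum_univ_val, ← Finset.sum_add_distrib]
    rfl
  have hs : ((s : Multiset (Fin (b + 1))).map Fin.val).sum = ∑ i, (u i : ℕ) := by
    rw [Sym.coe_eq_ofFn_equivOrderHom s, Multiset.map_coe, Multiset.sum_coe, List.map_ofFn,
      List.sum_ofFn]
    rfl
  omega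

theorem card_paths_eq_card_sym {m a b : ℕ} (h : a + b = m) (P : ℕ → Prop) :
    Nat.card {f : Fin m → Bool // upCount f = b ∧ P (pathArea f)} =
      Nat.card {s : Sym (Fin (b + 1)) a // P ((s : Multiset (Fin (b + 1))).map Fin.val).sum} := by
  subst h
  rw [← Nat.card_congr (Equiv.subtypeSubtypeEquivSubtypeInter (fun f => upCount f = b)
    fun f => P (pathArea f))]
  exact Nat.card_congr ((symEquivPaths a b).subtypeEquiv fun s => by
    rw [pathArea_symEquivPaths]).symm

theorem card_paths_area_mod_swap {m a b n : ℕ} (h : a + b = m) (hn : n ∣ a * b) :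
    Nat.card {f : Fin m → Bool // upCount f = a ∧ pathArea f % n = 0} =
      Nat.card {f : Fin m → Bool // upCount f = b ∧ pathArea f % n = 0} := by
  refine Nat.card_congr ((Equiv.refl _).arrowCongr Equiv.boolNot |>.subtypeEquiv fun f => ?_)
  have hup := upCount_add_upCount_not f
  have harea := pathArea_add_pathArea_not f
  simp only [← Nat.dvd_iff_mod_eq_zero]
  change _ ↔ upCount (fun i => !f i) = b ∧ n ∣ pathArea (fun i => !f i)
  constructor
  · rintro ⟨hf, hd⟩
    have hb : upCount (fun i => !f i) = b := by omega
    rw [hf, hb] at harea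
    exact ⟨hb, (Nat.dvd_add_right hd).1 (harea ▸ hn)⟩
  · rintro ⟨hb, hd⟩
    have hf : upCount f = a := by omega
    rw [hf, hb] at harea
    exact ⟨hf, (Nat.dvd_add_left hd).1 (harea ▸ hn)⟩

theorem card_paths_split_last {m c : ℕ} :
    Nat.card {f : Fin (m + 1) → Bool // upCount f = c + 1 ∧ pathArea f % (c + 1) = 0} =
      Nat.card {g : Fin m → Bool // upCount g = c ∧ pathArea g % (c + 1) = 0} +
        Nat.card {g : Fin m → Bool // upCount g = c + 1 ∧ pathArea g % (c + 1) = 0} := by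
  rw [Fin.card_subtype_snoc]
  congr 1 <;> refine Nat.card_congr (Equiv.subtypeEquivRight fun g => ?_)
  · simp [upCount_snoc, pathArea_snoc]
  · simp only [upCount_snoc, pathArea_snoc, Bool.toNat_false, add_zero, Bool.false_eq_true,
      if_false]
    exact and_congr_right fun h => by rw [h, Nat.add_mod_right]

theorem lattice_paths_eq_two_trees (n : ℕ) (hn : 0 < n) :
    Nat.card {f : Fin (2 * n) → Bool // upCount f = n ∧ pathArea f % n = 0} =
      2 * planeTreeT n := by
  obtain ⟨k, rfl⟩ : ∃ k, n = k + 1 := ⟨n - 1, by omega⟩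
  have htrees : planeTreeT (k + 1) =
      Nat.card {g : Fin (2 * k + 1) → Bool // upCount g = k ∧ pathArea g % (k + 1) = 0} :=
    (card_paths_eq_card_sym (by ring) (· % (k + 1) = 0)).symm
  change Nat.card {f : Fin (2 * k + 1 + 1) → Bool // _} = _
  rw [card_paths_split_last, card_paths_area_mod_swap (by ring) (dvd_mul_right _ k), htrees]
  ring
end
end

section
/- The number of monotone lattice paths from (0,0) to (n,n) with area ≡ 0 mod n whose last step is an up-step equals the number of such paths whose last step is a right-step, and each equals T_n. -/
open Finset Filter Topology

noncomputable section

/-!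
Reflection in the diagonal, `f ↦ (!f ·)`, swaps up- and right-steps and sends the area `a` to
`n * n - a`, so it preserves `area ≡ 0 mod n` and exchanges the two kinds of last step. A path
ending with an up-step is determined by the heights `g 0 ≤ ⋯ ≤ g (n - 1) < n` of its
right-steps, whose sum is the area, and sorted height sequences are the same as size-`n`
multisets over `{0, …, n - 1}`.
-/

theorem Finset.sum_card_filter_lt_add_sum_card_filter_lt {α : Type*} [LinearOrder α]
    {U V : Finset α} (h : Disjoint U V) :
    ∑ v ∈ V, #{u ∈ U | u < v} + ∑ u ∈ U, #{v ∈ V | v < u} = #U * #V := by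
  simp only [card_filter]
  rw [sum_comm (s := V), ← sum_add_distrib, card_eq_sum_ones U, sum_mul, one_mul]
  refine sum_congr rfl fun u hu => ?_
  rw [← sum_add_distrib, card_eq_sum_ones]
  refine sum_congr rfl fun v hv => ?_
  have : u ≠ v := fun huv => disjoint_left.mp h hu (huv ▸ hv)
  rcases this.lt_or_gt with huv | huv <;> simp [huv, huv.not_gt]

lemma StrictMono.card_filter_image_lt {α : Type*} [LinearOrder α] {k : ℕ} {e : Fin k → α}
    (he : StrictMono e) (i : Fin k) : #{a ∈ univ.image e | a < e i} = i := by
  rw [filter_image, card_image_of_injective _ he.injective]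
  simp only [he.lt_iff_lt]
  rw [← Fin.card_Iio]
  congr 1; ext; simp

lemma Finset.card_filter_lt_orderEmbOfFin {α : Type*} [LinearOrder α] (s : Finset α) {k : ℕ}
    (h : #s = k) (i : Fin k) : #{a ∈ s | a < s.orderEmbOfFin h i} = i := by
  have := (s.orderEmbOfFin h).strictMono.card_filter_image_lt i
  rwa [image_orderEmbOfFin_univ] at this

def monotoneEquivSym (α : Type*) [LinearOrder α] (k : ℕ) :
    {g : Fin k → α // Monotone g} ≃ Sym α k where
  toFun g := ⟨List.ofFn g.1, by simp⟩
  invFun s := ⟨fun i => (s.1.sort).get (i.cast (by simp)),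
    fun _ _ hij => (Multiset.pairwise_sort s.1 _).sortedLE.monotone_get hij⟩
  left_inv g := by
    refine Subtype.ext (funext fun i => ?_)
    simp only [Multiset.coe_sort, List.mergeSort_eq_self _ g.2.sortedLE_ofFn.pairwise,
      List.get_eq_getElem, List.getElem_ofFn]
    rfl
  right_inv s := by
    refine Subtype.ext ?_
    show ((List.ofFn _ : List α) : Multiset α) = s.1
    conv_rhs => rw [← Multiset.sort_eq s.1 (· ≤ ·)]
    exact congrArg _ (List.ext_getElem (by simp) fun _ _ _ => by simp; rfl)

lemma sum_map_monotoneEquivSym {α : Type*} [LinearOrder α] {k : ℕ} {M : Type*} [AddCommMonoid M]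
    (φ : α → M) (g : {g : Fin k → α // Monotone g}) :
    ((monotoneEquivSym α k g : Multiset α).map φ).sum = ∑ i, φ (g.1 i) := by
  show ((List.ofFn g.1 : Multiset α).map φ).sum = _
  simp [List.sum_ofFn]

namespace LatticePath

variable {m n : ℕ}

def lastStep (hn : 0 < n) : Fin (2 * n) := ⟨2 * n - 1, Nat.sub_lt (by omega) Nat.one_pos⟩

lemma val_lastStep (hn : 0 < n) : (lastStep hn : ℕ) = 2 * n - 1 := rfl

lemma le_lastStep (hn : 0 < n) (j : Fin (2 * n)) : j ≤ lastStep hn :=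
  Fin.le_def.mpr (by rw [val_lastStep]; omega)

def upSteps (f : Fin m → Bool) : Finset (Fin m) := {i | f i = true}

def rightSteps (f : Fin m → Bool) : Finset (Fin m) := {i | f i = false}

@[simp] lemma mem_upSteps {f : Fin m → Bool} {i : Fin m} : i ∈ upSteps f ↔ f i = true := by
  simp [upSteps]

@[simp] lemma mem_rightSteps {f : Fin m → Bool} {i : Fin m} :
    i ∈ rightSteps f ↔ f i = false := by
  simp [rightSteps]

@[simp] lemma upSteps_not (f : Fin m → Bool) : upSteps (fun i => !f i) = rightSteps f := by
  ext; simp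

@[simp] lemma rightSteps_not (f : Fin m → Bool) : rightSteps (fun i => !f i) = upSteps f := by
  ext; simp

lemma upCount_eq_card (f : Fin m → Bool) : upCount f = #(upSteps f) := by
  rw [upCount, Nat.card_eq_fintype_card, Fintype.card_subtype, upSteps]

lemma upsBefore_eq_card (f : Fin m → Bool) (b : Fin m) :
    upsBefore f b = #{j ∈ upSteps f | j < b} := by
  rw [upsBefore, Nat.card_eq_fintype_card, Fintype.card_subtype, upSteps, filter_filter]
  simp only [and_comm]

lemma card_upSteps_add_card_rightSteps (f : Fin m → Bool) :
    #(upSteps f) + #(rightSteps f) = m := by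
  simpa [upSteps, rightSteps] using card_filter_add_card_filter_not (s := univ) (f · = true)

lemma upsBefore_add_card_rightSteps_lt (f : Fin m → Bool) (b : Fin m) :
    upsBefore f b + #{j ∈ rightSteps f | j < b} = b := by
  have hsplit := card_filter_add_card_filter_not (s := Iio b) (f · = true)
  simp only [Bool.not_eq_true, Fin.card_Iio] at hsplit
  rw [upsBefore_eq_card, ← hsplit]
  congr 2 <;> ext <;> simp [and_comm]

lemma monotone_upsBefore (f : Fin m → Bool) : Monotone (upsBefore f) := fun a b hab => by
  simp only [upsBefore_eq_card]
  exact card_le_card (monotone_filter_right _ fun j _ hj => lt_of_lt_of_le hj hab)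

lemma upsBefore_lt_upCount {f : Fin m → Bool} {l b : Fin m} (hl : f l = true) (hb : b ≤ l) :
    upsBefore f b < upCount f := by
  rw [upsBefore_eq_card, upCount_eq_card]
  exact card_lt_card (filter_ssubset.mpr ⟨l, mem_upSteps.mpr hl, hb.not_gt⟩)

lemma pathArea_eq_sum_upsBefore (f : Fin m → Bool) :
    pathArea f = ∑ i ∈ rightSteps f, upsBefore f i := by
  rw [pathArea, ← sum_filter, rightSteps]

theorem pathArea_add_pathArea_not (f : Fin m → Bool) :
    pathArea f + pathArea (fun i => !f i) = #(upSteps f) * #(rightSteps f) := by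
  simp only [pathArea_eq_sum_upsBefore, upsBefore_eq_card, upSteps_not, rightSteps_not]
  refine Finset.sum_card_filter_lt_add_sum_card_filter_lt (disjoint_left.mpr fun i hi hi' => ?_)
  simp_all

lemma upCount_not_and_pathArea_not {f : Fin (2 * n) → Bool} (hc : upCount f = n)
    (ha : pathArea f % n = 0) :
    upCount (fun i => !f i) = n ∧ pathArea (fun i => !f i) % n = 0 := by
  have hsum := card_upSteps_add_card_rightSteps f
  have harea := pathArea_add_pathArea_not f
  rw [upCount_eq_card] at hc ⊢
  rw [upSteps_not]
  refine ⟨by omega, ?_⟩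
  rw [← Nat.dvd_iff_mod_eq_zero] at ha ⊢
  rw [hc, show #(rightSteps f) = n by omega] at harea
  exact (Nat.dvd_add_right ha).mp (harea ▸ dvd_mul_left n n)

def reflectEquiv (hn : 0 < n) (b : Bool) :
    {f : Fin (2 * n) → Bool // upCount f = n ∧ pathArea f % n = 0 ∧ f (lastStep hn) = b} ≃
    {f : Fin (2 * n) → Bool //
      upCount f = n ∧ pathArea f % n = 0 ∧ f (lastStep hn) = !b} where
  toFun f := ⟨(!f.1 ·), upCount_not_and_pathArea_not f.2.1 f.2.2.1 |>.1,
    upCount_not_and_pathArea_not f.2.1 f.2.2.1 |>.2, by simp [f.2.2.2]⟩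
  invFun f := ⟨(!f.1 ·), upCount_not_and_pathArea_not f.2.1 f.2.2.1 |>.1,
    upCount_not_and_pathArea_not f.2.1 f.2.2.1 |>.2, by simp [f.2.2.2]⟩
  left_inv f := by simp
  right_inv f := by simp

def rightStepPos (g : Fin n → Fin n) (i : Fin n) : Fin (2 * n) :=
  ⟨g i + i, by omega⟩

lemma val_rightStepPos (g : Fin n → Fin n) (i : Fin n) : (rightStepPos g i : ℕ) = g i + i := rfl

lemma strictMono_rightStepPos {g : Fin n → Fin n} (hg : Monotone g) :
    StrictMono (rightStepPos g) := fun i j hij => by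
  have : g i ≤ g j := hg hij.le
  simp only [rightStepPos, Fin.mk_lt_mk]
  omega

/-- The path whose `i`-th right-step is at height `g i`, i.e. at position `g i + i`. -/
def pathOfHeights (g : Fin n → Fin n) : Fin (2 * n) → Bool :=
  fun j => decide (j ∉ univ.image (rightStepPos g))

lemma rightSteps_pathOfHeights (g : Fin n → Fin n) :
    rightSteps (pathOfHeights g) = univ.image (rightStepPos g) := by
  ext; simp [pathOfHeights]

lemma upCount_pathOfHeights {g : Fin n → Fin n} (hg : Monotone g) :
    upCount (pathOfHeights g) = n := by
  have h := card_upSteps_add_card_rightSteps (pathOfHeights g)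
  rw [rightSteps_pathOfHeights, card_image_of_injective _ (strictMono_rightStepPos hg).injective,
    card_univ, Fintype.card_fin] at h
  rw [upCount_eq_card]
  omega

lemma pathOfHeights_last (hn : 0 < n) (g : Fin n → Fin n) :
    pathOfHeights g (lastStep hn) = true := by
  suffices ∀ i, rightStepPos g i ≠ lastStep hn by simpa [pathOfHeights]
  intro i h
  have := congrArg Fin.val h
  rw [val_rightStepPos, val_lastStep] at this
  omega

lemma upsBefore_pathOfHeights {g : Fin n → Fin n} (hg : Monotone g) (i : Fin n) :
    upsBefore (pathOfHeights g) (rightStepPos g i) = g i := by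
  have h := upsBefore_add_card_rightSteps_lt (pathOfHeights g) (rightStepPos g i)
  rw [rightSteps_pathOfHeights, (strictMono_rightStepPos hg).card_filter_image_lt] at h
  rw [val_rightStepPos] at h
  omega

lemma pathArea_pathOfHeights {g : Fin n → Fin n} (hg : Monotone g) :
    pathArea (pathOfHeights g) = ∑ i, (g i : ℕ) := by
  rw [pathArea_eq_sum_upsBefore, rightSteps_pathOfHeights,
    sum_image fun i _ j _ h => (strictMono_rightStepPos hg).injective h]
  exact sum_congr rfl fun i _ => upsBefore_pathOfHeights hg i

lemma card_rightSteps {f : Fin (2 * n) → Bool} (hf : upCount f = n) : #(rightSteps f) = n := by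
  have := card_upSteps_add_card_rightSteps f
  rw [upCount_eq_card] at hf
  omega

def heightsOfPath (hn : 0 < n) {f : Fin (2 * n) → Bool} (hf : upCount f = n)
    (hlast : f (lastStep hn) = true) (i : Fin n) : Fin n :=
  ⟨upsBefore f ((rightSteps f).orderEmbOfFin (card_rightSteps hf) i),
    (upsBefore_lt_upCount hlast (le_lastStep hn _)).trans_eq hf⟩

lemma monotone_heightsOfPath (hn : 0 < n) {f : Fin (2 * n) → Bool} (hf : upCount f = n)
    (hlast : f (lastStep hn) = true) : Monotone (heightsOfPath hn hf hlast) :=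
  fun _ _ hij => Fin.le_def.mpr <| monotone_upsBefore f <| (orderEmbOfFin _ _).monotone hij

lemma rightStepPos_heightsOfPath (hn : 0 < n) {f : Fin (2 * n) → Bool} (hf : upCount f = n)
    (hlast : f (lastStep hn) = true) :
    rightStepPos (heightsOfPath hn hf hlast) =
      (rightSteps f).orderEmbOfFin (card_rightSteps hf) := by
  ext i
  have h := upsBefore_add_card_rightSteps_lt f
    ((rightSteps f).orderEmbOfFin (card_rightSteps hf) i)
  rw [card_filter_lt_orderEmbOfFin] at h
  simp only [rightStepPos, heightsOfPath]
  omega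

lemma pathOfHeights_heightsOfPath (hn : 0 < n) {f : Fin (2 * n) → Bool} (hf : upCount f = n)
    (hlast : f (lastStep hn) = true) : pathOfHeights (heightsOfPath hn hf hlast) = f := by
  have h := rightSteps_pathOfHeights (heightsOfPath hn hf hlast)
  rw [rightStepPos_heightsOfPath, image_orderEmbOfFin_univ] at h
  funext j
  simpa using congrArg (j ∈ ·) h

lemma heightsOfPath_pathOfHeights (hn : 0 < n) {g : Fin n → Fin n} (hg : Monotone g) :
    heightsOfPath hn (upCount_pathOfHeights hg) (pathOfHeights_last hn g) = g := by
  have h := orderEmbOfFin_unique (card_rightSteps (upCount_pathOfHeights hg))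
    (fun i => (rightSteps_pathOfHeights g).symm ▸ mem_image_of_mem _ (mem_univ i))
    (strictMono_rightStepPos hg)
  funext i
  refine Fin.ext ?_
  show upsBefore _ ((rightSteps _).orderEmbOfFin _ i) = _
  rw [← h]
  exact upsBefore_pathOfHeights hg i

def heightsEquiv (hn : 0 < n) :
    {g : Fin n → Fin n // Monotone g} ≃
      {f : Fin (2 * n) → Bool // upCount f = n ∧ f (lastStep hn) = true} where
  toFun g := ⟨pathOfHeights g.1, upCount_pathOfHeights g.2, pathOfHeights_last hn g.1⟩
  invFun f := ⟨heightsOfPath hn f.2.1 f.2.2, monotone_heightsOfPath hn f.2.1 f.2.2⟩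
  left_inv g := Subtype.ext (heightsOfPath_pathOfHeights hn g.2)
  right_inv f := Subtype.ext (pathOfHeights_heightsOfPath hn f.2.1 f.2.2)

lemma pathArea_heightsEquiv (hn : 0 < n) (g : {g : Fin n → Fin n // Monotone g}) :
    pathArea (heightsEquiv hn g).1 = ∑ i, (g.1 i : ℕ) :=
  pathArea_pathOfHeights g.2

end LatticePath

open LatticePath in
theorem lattice_paths_last_step (n : ℕ) (hn : 0 < n) :
    Nat.card {f : Fin (2 * n) → Bool //
        upCount f = n ∧ pathArea f % n = 0 ∧ f ⟨2 * n - 1, by omega⟩ = true} =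
      Nat.card {f : Fin (2 * n) → Bool //
        upCount f = n ∧ pathArea f % n = 0 ∧ f ⟨2 * n - 1, by omega⟩ = false} ∧
    Nat.card {f : Fin (2 * n) → Bool //
        upCount f = n ∧ pathArea f % n = 0 ∧ f ⟨2 * n - 1, by omega⟩ = true} =
      planeTreeT n := by
  refine ⟨Nat.card_congr (reflectEquiv hn true), ?_⟩
  calc _ = Nat.card {f : {f : Fin (2 * n) → Bool // upCount f = n ∧ f (lastStep hn) = true} //
            pathArea f.1 % n = 0} :=
        Nat.card_congr
          { toFun f := ⟨⟨f.1, f.2.1, f.2.2.2⟩, f.2.2.1⟩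
            invFun f := ⟨f.1.1, f.1.2.1, f.2, f.1.2.2⟩
            left_inv _ := rfl
            right_inv _ := rfl }
    _ = Nat.card {g : {g : Fin n → Fin n // Monotone g} // (∑ i, (g.1 i : ℕ)) % n = 0} :=
        Nat.card_congr <| (Equiv.subtypeEquiv (heightsEquiv hn) fun g => by
          rw [pathArea_heightsEquiv]).symm
    _ = planeTreeT n :=
        Nat.card_congr <| Equiv.subtypeEquiv (monotoneEquivSym (Fin n) n) fun g => by
          rw [sum_map_monotoneEquivSym]
end
end

section
/- The number of ±1-increment bridges of length 2n (walks B_0=0, B_{2n}=0 with steps ±1) whose diamond area σ(B) = (1/2)·(B_2 + B_4 + ... + B_{2n}) is congruent to 0 mod n equals the number of monotone lattice paths from (0,0) to (n,n) with area congruent to 0 mod n. -/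
open Finset Filter Topology

noncomputable section

namespace BridgeProof


variable {n : ℕ}

def chi (n : ℕ) (g : Fin (2*n) → Bool) (i : ℕ) : ℤ :=
  if h : i < 2*n then (if g ⟨i,h⟩ then 1 else 0) else 0

lemma chi_coe (g : Fin (2*n) → Bool) (i : Fin (2*n)) :
    chi n g i = if g i then 1 else 0 := by
  simp [chi, i.isLt]

lemma stepVal_eq (g : Fin (2*n) → Bool) {i : ℕ} (hi : i < 2*n) :
    stepVal n g i = 2 * chi n g i - 1 := by
  simp only [stepVal, chi, dif_pos hi]
  cases h : g ⟨i, hi⟩ <;> simp [h]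

lemma upCount_eq (g : Fin (2*n) → Bool) :
    (upCount g : ℤ) = ∑ i ∈ range (2*n), chi n g i := by
  rw [upCount, Nat.card_eq_fintype_card, Fintype.card_subtype,
    ← Fin.sum_univ_eq_sum_range (chi n g) (2*n)]
  push_cast [Finset.card_filter]
  exact Finset.sum_congr rfl fun i _ => by rw [chi_coe]

lemma sum_halves (N : ℕ) :
    ∑ i ∈ range (2*N), ((i/2 : ℕ) : ℤ) = N * (N-1) := by
  induction N with
  | zero => simp
  | succ m ih =>
    have h : 2*(m+1) = (2*m) + 1 + 1 := by ring
    rw [h, Finset.sum_range_succ, Finset.sum_range_succ, ih]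
    have h1 : ((2*m)/2 : ℕ) = m := by omega
    have h2 : ((2*m+1)/2 : ℕ) = m := by omega
    rw [h1, h2]; push_cast; ring

lemma sum_wpos_eq (g : Fin (2*n) → Bool) :
    ∑ k ∈ range n, wpos n g (2*(k+1))
      = ∑ i ∈ range (2*n), ((n : ℤ) - ((i/2 : ℕ) : ℤ)) * stepVal n g i := by
  have h1 : ∀ k ∈ range n, wpos n g (2*(k+1)) =
      ∑ i ∈ range (2*n), if i < 2*(k+1) then stepVal n g i else 0 := by
    intro k hk
    rw [mem_range] at hk
    rw [wpos, ← Finset.sum_filter]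
    congr 1
    ext i
    simp only [mem_filter, mem_range]
    omega
  rw [Finset.sum_congr rfl h1, Finset.sum_comm]
  refine Finset.sum_congr rfl fun i hi => ?_
  rw [mem_range] at hi
  rw [← Finset.sum_filter, Finset.sum_const]
  have h2 : (range n).filter (fun k => i < 2*(k+1)) = Finset.Ico (i/2) n := by
    ext k; simp only [mem_filter, mem_range, Finset.mem_Ico]; omega
  rw [h2, Nat.card_Ico, nsmul_eq_mul]
  have h3 : (i/2 : ℕ) ≤ n := by omega
  push_cast [h3]
  ring


lemma two_cZ (n : ℕ) : ((n*(n-1)/2 : ℕ) : ℤ) * 2 = (n:ℤ) * ((n:ℤ)-1) := by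
  have hev : Even (n*(n-1)) := by
    rcases Nat.even_or_odd n with h | h
    · exact h.mul_right _
    · exact (Nat.Odd.sub_odd h odd_one).mul_left _
  have h := Nat.div_mul_cancel hev.two_dvd
  have hn' : (1:ℤ) ≤ n ∨ n = 0 := by omega
  rcases hn' with h1 | h1
  · have : ((n-1:ℕ):ℤ) = (n:ℤ) - 1 := by push_cast [Nat.cast_sub] <;> omega
    calc ((n*(n-1)/2 : ℕ) : ℤ) * 2 = ((n*(n-1)/2 * 2 : ℕ) : ℤ) := by push_cast; ring
    _ = ((n*(n-1) : ℕ) : ℤ) := by rw [h]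
    _ = (n:ℤ) * ((n:ℤ)-1) := by push_cast [this]; ring
  · subst h1; simp

lemma bridge_iff (g : Fin (2*n) → Bool) : IsBridge n g ↔ upCount g = n := by
  have hw : wpos n g (2*n) = 2 * (∑ i ∈ range (2*n), chi n g i) - 2*n := by
    rw [wpos, Finset.sum_congr rfl (fun i hi => stepVal_eq g (mem_range.mp hi)),
      Finset.sum_sub_distrib, ← Finset.mul_sum, Finset.sum_const, Finset.card_range]
    push_cast; ring
  rw [IsBridge, hw, ← upCount_eq]
  constructor
  · intro h; exact_mod_cast (by linarith : ((upCount g : ℤ)) = n)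
  · intro h; rw [h]; ring

lemma dsigma_eq (g : Fin (2*n) → Bool) (hb : IsBridge n g) :
    dsigma n g = ((n*(n-1)/2 : ℕ) : ℤ)
      - ∑ i ∈ range (2*n), ((i/2 : ℕ) : ℤ) * chi n g i := by
  have hU : (∑ i ∈ range (2*n), chi n g i) = n := by
    rw [← upCount_eq, (bridge_iff g).mp hb]
  have hS : ∑ k ∈ range n, wpos n g (2*(k+1)) =
      2 * (((n*(n-1)/2 : ℕ) : ℤ)
        - ∑ i ∈ range (2*n), ((i/2 : ℕ) : ℤ) * chi n g i) := by
    rw [sum_wpos_eq]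
    have hpt : ∀ i ∈ range (2*n), ((n:ℤ) - ((i/2:ℕ):ℤ)) * stepVal n g i
        = 2*(n:ℤ)*chi n g i - 2*(((i/2:ℕ):ℤ) * chi n g i) - (n:ℤ) + ((i/2:ℕ):ℤ) := by
      intro i hi
      rw [stepVal_eq g (mem_range.mp hi)]; ring
    rw [Finset.sum_congr rfl hpt]
    simp only [Finset.sum_add_distrib, Finset.sum_sub_distrib, ← Finset.mul_sum,
      Finset.sum_const, Finset.card_range, hU, sum_halves, nsmul_eq_mul]
    have h2 := two_cZ n
    set c : ℤ := ((n*(n-1)/2 : ℕ) : ℤ) with hc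
    push_cast
    linarith
  rw [dsigma, psig, hS, Int.mul_ediv_cancel_left _ two_ne_zero]


lemma upsBefore_eq (f : Fin (2*n) → Bool) (i : Fin (2*n)) :
    (upsBefore f i : ℤ) = ∑ j ∈ range (2*n), if j < i.val then chi n f j else 0 := by
  rw [upsBefore, Nat.card_eq_fintype_card, Fintype.card_subtype,
    ← Fin.sum_univ_eq_sum_range (fun j => if j < i.val then chi n f j else 0) (2*n)]
  push_cast [Finset.card_filter]
  refine Finset.sum_congr rfl fun j _ => ?_
  rw [chi_coe]
  by_cases h1 : (j:ℕ) < (i:ℕ) <;> by_cases h2 : f j <;>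
    simp [h1, h2, Fin.lt_def]

lemma chi_mul_self (g : Fin (2*n) → Bool) (i : ℕ) :
    chi n g i * chi n g i = chi n g i := by
  unfold chi; split_ifs <;> norm_num

lemma M_eq (f : Fin (2*n) → Bool) (hU : (∑ i ∈ range (2*n), chi n f i) = n) :
    2 * (∑ i ∈ range (2*n), chi n f i *
        (∑ j ∈ range (2*n), if j < i then chi n f j else 0))
      = (n:ℤ) * n - n := by
  set c := chi n f with hc
  have e1 : ∀ i : ℕ, c i * (∑ j ∈ range (2*n), if j < i then c j else 0)
      = ∑ j ∈ range (2*n), if j < i then c i * c j else 0 := by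
    intro i
    rw [Finset.mul_sum]
    exact Finset.sum_congr rfl fun j _ => by split <;> simp
  have hsym : (∑ i ∈ range (2*n), ∑ j ∈ range (2*n), if j < i then c i * c j else 0)
      = ∑ i ∈ range (2*n), ∑ j ∈ range (2*n), if i < j then c i * c j else 0 := by
    rw [Finset.sum_comm]
    exact Finset.sum_congr rfl fun i _ => Finset.sum_congr rfl fun j _ => by
      split <;> [rw [mul_comm]; rfl]
  have htot : (∑ i ∈ range (2*n), ∑ j ∈ range (2*n),
        ((if j < i then c i * c j else 0) + (if i < j then c i * c j else 0)))
      = (n:ℤ) * n - n := by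
    have hpt : ∀ i ∈ range (2*n), ∀ j ∈ range (2*n),
        ((if j < i then c i * c j else 0) + (if i < j then c i * c j else 0))
          = c i * c j - (if j = i then c i * c j else 0) := by
      intro i _ j _
      rcases lt_trichotomy i j with h | h | h
      · have h1 : ¬ j < i := by omega
        have h2 : j ≠ i := by omega
        simp [h, h1, h2]
      · subst h; simp
      · have h1 : ¬ i < j := by omega
        have h2 : j ≠ i := by omega
        simp [h, h1, h2]
    rw [Finset.sum_congr rfl fun i hi => Finset.sum_congr rfl (hpt i hi)]
    simp only [Finset.sum_sub_distrib]
    have hdiag : ∀ i ∈ range (2*n),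
        (∑ j ∈ range (2*n), if j = i then c i * c j else 0) = c i := by
      intro i hi
      rw [Finset.sum_ite_eq' (range (2*n)) i (fun j => c i * c j), if_pos hi, chi_mul_self]
    rw [Finset.sum_congr rfl hdiag, hU, ← Finset.sum_mul_sum, hU]
  have hM : (∑ i ∈ range (2*n), c i *
        (∑ j ∈ range (2*n), if j < i then c j else 0))
      = ∑ i ∈ range (2*n), ∑ j ∈ range (2*n), if j < i then c i * c j else 0 :=
    Finset.sum_congr rfl fun i _ => e1 i
  rw [two_mul, hM]
  nth_rewrite 2 [hsym]
  rw [← Finset.sum_add_distrib]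
  rw [Finset.sum_congr rfl fun i _ => (Finset.sum_add_distrib).symm]
  exact htot


lemma pathArea_eq (f : Fin (2*n) → Bool) (hU : upCount f = n) :
    (pathArea f : ℤ) = (2*(n:ℤ)-1)*(n:ℤ)
      - (∑ j ∈ range (2*n), (j:ℤ) * chi n f j) - ((n*(n-1)/2 : ℕ):ℤ) := by
  have hUc : (∑ i ∈ range (2*n), chi n f i) = (n:ℤ) := by rw [← upCount_eq, hU]
  have hA : (pathArea f : ℤ) = ∑ i ∈ range (2*n), (1 - chi n f i) *
      (∑ j ∈ range (2*n), if j < i then chi n f j else 0) := by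
    rw [pathArea, ← Fin.sum_univ_eq_sum_range (fun i => (1 - chi n f i) *
      (∑ j ∈ range (2*n), if j < i then chi n f j else 0)) (2*n)]
    push_cast
    refine Finset.sum_congr rfl fun i _ => ?_
    rw [chi_coe, ← upsBefore_eq]
    cases h : f i <;> simp [h]
  have hT : (∑ i ∈ range (2*n), ∑ j ∈ range (2*n), if j < i then chi n f j else 0)
      = (2*(n:ℤ)-1)*(n:ℤ) - ∑ j ∈ range (2*n), (j:ℤ) * chi n f j := by
    rw [Finset.sum_comm]
    have h1 : ∀ j ∈ range (2*n), (∑ i ∈ range (2*n), if j < i then chi n f j else 0)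
        = (2*(n:ℤ) - 1 - (j:ℤ)) * chi n f j := by
      intro j hj
      rw [mem_range] at hj
      rw [← Finset.sum_filter, Finset.sum_const]
      have h2 : (range (2*n)).filter (fun i => j < i) = Finset.Ico (j+1) (2*n) := by
        ext i; simp only [mem_filter, mem_range, Finset.mem_Ico]; omega
      rw [h2, Nat.card_Ico, nsmul_eq_mul]
      have h3 : j + 1 ≤ 2*n := hj
      push_cast [h3]
      ring
    rw [Finset.sum_congr rfl h1]
    have h4 : ∀ j ∈ range (2*n), (2*(n:ℤ)-1-(j:ℤ))*chi n f j
        = (2*(n:ℤ)-1)*chi n f j - (j:ℤ)*chi n f j := fun j _ => by ring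
    rw [Finset.sum_congr rfl h4, Finset.sum_sub_distrib, ← Finset.mul_sum, hUc]
  have hMv := M_eq f hUc
  have h2c := two_cZ n
  have hsplit : (pathArea f : ℤ) =
      (∑ i ∈ range (2*n), ∑ j ∈ range (2*n), if j < i then chi n f j else 0)
      - ∑ i ∈ range (2*n), chi n f i *
          (∑ j ∈ range (2*n), if j < i then chi n f j else 0) := by
    rw [hA, ← Finset.sum_sub_distrib]
    exact Finset.sum_congr rfl fun i _ => by ring
  rw [hsplit, hT]
  linarith


def pe (n : ℕ) : Fin (2*n) ≃ Fin (2*n) where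
  toFun j := ⟨j.val / 2 + (j.val % 2) * n, by
    have := j.isLt
    rcases Nat.mod_two_eq_zero_or_one j.val with h | h <;> rw [h] <;> omega⟩
  invFun k := ⟨if k.val < n then 2 * k.val else 2 * (k.val - n) + 1, by
    have := k.isLt; split <;> omega⟩
  left_inv j := by
    have hj := j.isLt
    apply Fin.ext
    rcases Nat.mod_two_eq_zero_or_one j.val with h | h <;>
      simp only [h, zero_mul, one_mul, add_zero] <;> split <;> omega
  right_inv k := by
    have hk := k.isLt
    apply Fin.ext
    simp only
    split
    · have h0 : (2 * k.val) % 2 = 0 := by omega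
      rw [h0]; omega
    · have h1 : (2 * (k.val - n) + 1) % 2 = 1 := by omega
      rw [h1]; omega

lemma pe_val (j : Fin (2*n)) : ((pe n j : Fin (2*n)) : ℕ) = j.val / 2 + (j.val % 2) * n := rfl

theorem main_aux (n : ℕ) (hn : 0 < n) :
    Nat.card {ε : Fin (2 * n) → Bool // IsBridge n ε ∧ (n : ℤ) ∣ dsigma n ε} =
      Nat.card {f : Fin (2 * n) → Bool // upCount f = n ∧ pathArea f % n = 0} := by
  refine Nat.card_congr
    (Equiv.subtypeEquiv (Equiv.arrowCongr (pe n) (Equiv.refl Bool)) fun ε => ?_)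
  set f : Fin (2*n) → Bool := fun i => ε ((pe n).symm i) with hf
  have happ : (Equiv.arrowCongr (pe n) (Equiv.refl Bool)) ε = f := rfl
  rw [happ]
  have hcnt : upCount f = upCount ε :=
    Nat.card_congr (Equiv.subtypeEquiv (pe n).symm fun i => Iff.rfl)
  -- divisibility transfer
  have hdvd : (n:ℤ) ∣ (∑ j ∈ range (2*n), (j:ℤ) * chi n f j)
      - (∑ j ∈ range (2*n), ((j/2 : ℕ):ℤ) * chi n ε j) := by
    rw [← Fin.sum_univ_eq_sum_range (fun j => (j:ℤ) * chi n f j) (2*n),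
      ← Fin.sum_univ_eq_sum_range (fun j => ((j/2 : ℕ):ℤ) * chi n ε j) (2*n),
      ← Equiv.sum_comp (pe n) (fun j : Fin (2*n) => ((j:ℕ):ℤ) * chi n f j),
      ← Finset.sum_sub_distrib]
    apply Finset.dvd_sum
    intro j _
    have hchi : chi n f ((pe n j : Fin (2*n)) : ℕ) = chi n ε (j : ℕ) := by
      rw [chi_coe, chi_coe, hf]
      simp
    rw [hchi, ← sub_mul]
    apply Dvd.dvd.mul_right
    rw [pe_val]
    refine ⟨(j.val % 2 : ℕ), ?_⟩
    push_cast
    ring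
  have h2c := two_cZ n
  constructor
  · rintro ⟨hb, hd⟩
    have hUe : upCount ε = n := (bridge_iff ε).mp hb
    have hUf : upCount f = n := hcnt.trans hUe
    refine ⟨hUf, ?_⟩
    rw [dsigma_eq ε hb] at hd
    have hP := pathArea_eq f hUf
    have hgoal : (n:ℤ) ∣ (pathArea f : ℤ) := by
      rw [hP]
      have key : (2*(n:ℤ)-1)*(n:ℤ) - (∑ j ∈ range (2*n), (j:ℤ) * chi n f j)
            - ((n*(n-1)/2 : ℕ):ℤ)
          = (2*(n:ℤ)-1)*(n:ℤ)
            - ((∑ j ∈ range (2*n), (j:ℤ) * chi n f j)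
                - (∑ j ∈ range (2*n), ((j/2 : ℕ):ℤ) * chi n ε j))
            + (((n*(n-1)/2 : ℕ):ℤ)
                - ∑ j ∈ range (2*n), ((j/2 : ℕ):ℤ) * chi n ε j)
            - ((n*(n-1)/2 : ℕ):ℤ) * 2 := by ring
      rw [key, h2c]
      exact dvd_sub (dvd_add (dvd_sub (⟨2*(n:ℤ)-1, by ring⟩ : (n:ℤ) ∣ (2*(n:ℤ)-1)*(n:ℤ)) hdvd) hd)
        ⟨(n:ℤ)-1, by ring⟩
    obtain ⟨c, hc⟩ := Int.natCast_dvd_natCast.mp hgoal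
    rw [hc]
    exact Nat.mul_mod_right n c
  · rintro ⟨hUf, hp⟩
    have hUe : upCount ε = n := hcnt.symm.trans hUf
    have hb : IsBridge n ε := (bridge_iff ε).mpr hUe
    refine ⟨hb, ?_⟩
    rw [dsigma_eq ε hb]
    have hP := pathArea_eq f hUf
    have hpd : (n:ℤ) ∣ (pathArea f : ℤ) :=
      Int.natCast_dvd_natCast.mpr (Nat.dvd_of_mod_eq_zero hp)
    rw [hP] at hpd
    have key : ((n*(n-1)/2 : ℕ):ℤ)
          - ∑ j ∈ range (2*n), ((j/2 : ℕ):ℤ) * chi n ε j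
        = ((2*(n:ℤ)-1)*(n:ℤ) - (∑ j ∈ range (2*n), (j:ℤ) * chi n f j)
            - ((n*(n-1)/2 : ℕ):ℤ))
          - (2*(n:ℤ)-1)*(n:ℤ)
          + ((∑ j ∈ range (2*n), (j:ℤ) * chi n f j)
              - (∑ j ∈ range (2*n), ((j/2 : ℕ):ℤ) * chi n ε j))
          + ((n*(n-1)/2 : ℕ):ℤ) * 2 := by ring
    rw [key, h2c]
    exact dvd_add (dvd_add (dvd_sub hpd ⟨2*(n:ℤ)-1, by ring⟩) hdvd) ⟨(n:ℤ)-1, by ring⟩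


end BridgeProof

theorem bridges_eq_lattice_paths (n : ℕ) (hn : 0 < n) :
    Nat.card {ε : Fin (2 * n) → Bool // IsBridge n ε ∧ (n : ℤ) ∣ dsigma n ε} =
      Nat.card {f : Fin (2 * n) → Bool // upCount f = n ∧ pathArea f % n = 0} :=
  BridgeProof.main_aux n hn
end
end

section
/- The number of ±1-increment bridges of length 2n with diamond area congruent to 0 mod n equals 2·T_n, where T_n is the number of size-n submultisets of {0,...,n-1} summing to 0 mod n. -/
open Finset Filter Topology

noncomputable section

section aux
variable (n : ℕ)

/-- up-step set -/
def upSet (ε : Fin (2*n) → Bool) : Finset (Fin (2*n)) := Finset.univ.filter (fun i => ε i = true)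

lemma wpos_eq (ε : Fin (2*n) → Bool) (k : ℕ) (hk : k ≤ 2*n) :
    wpos n ε k = 2 * ((Finset.univ.filter (fun i : Fin (2*n) => i.val < k ∧ ε i = true)).card : ℤ) - k := by
  classical
  have h1 : wpos n ε k
      = ∑ i ∈ Finset.range k, (2 * (if h : i < 2*n then (if ε ⟨i,h⟩ then (1:ℤ) else 0) else 0) - 1) := by
    unfold wpos
    refine Finset.sum_congr rfl fun i hi => ?_
    have hi' : i < 2*n := lt_of_lt_of_le (Finset.mem_range.1 hi) hk
    simp only [stepVal, dif_pos hi']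
    by_cases h : ε ⟨i, hi'⟩ <;> simp [h]
  rw [h1, Finset.sum_sub_distrib, Finset.sum_const, ← Finset.mul_sum]
  have h2 : ∑ i ∈ Finset.range k, (if h : i < 2*n then (if ε ⟨i,h⟩ then (1:ℤ) else 0) else 0)
      = ((Finset.univ.filter (fun i : Fin (2*n) => i.val < k ∧ ε i = true)).card : ℤ) := by
    rw [Finset.card_filter]
    push_cast
    have h3 : ∀ x : Fin (2*n), (if (x.val < k ∧ ε x = true) then (1:ℤ) else 0)
        = (fun i => if h : i < 2*n then (if i < k ∧ ε ⟨i,h⟩ then (1:ℤ) else 0) else 0) x.val := by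
      intro x
      simp [x.isLt]
    rw [Finset.sum_congr rfl (fun x _ => h3 x),
      Fin.sum_univ_eq_sum_range (fun i => if h : i < 2*n then (if i < k ∧ ε ⟨i,h⟩ then (1:ℤ) else 0) else 0) (2*n),
      ← Finset.sum_subset (Finset.range_subset_range.2 hk)]
    · refine Finset.sum_congr rfl fun i hi => ?_
      have hi' : i < k := Finset.mem_range.1 hi
      have h : i < 2*n := lt_of_lt_of_le hi' hk
      simp [h, hi']
    · intro i _ hi
      have : ¬ i < k := fun h => hi (Finset.mem_range.2 h)
      by_cases h : i < 2*n <;> simp [h, this]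
  rw [h2]
  simp [mul_comm]

/-- statistic `t(S) = ∑ ⌊p/2⌋` -/
def tStat (S : Finset (Fin (2*n))) : ℕ := ∑ p ∈ S, p.val / 2

lemma isBridge_iff (ε : Fin (2*n) → Bool) : IsBridge n ε ↔ (upSet n ε).card = n := by
  have h := wpos_eq n ε (2*n) le_rfl
  have hs : Finset.univ.filter (fun i : Fin (2*n) => i.val < 2*n ∧ ε i = true) = upSet n ε := by
    ext i; simp [upSet, i.isLt]
  rw [hs] at h
  unfold IsBridge
  rw [h]
  constructor <;> intro h' <;> omega

lemma sum_ind (p : ℕ) (hp : p < 2*n) :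
    ((Finset.range n).filter (fun i => p < 2*(i+1))).card = n - p/2 := by
  have : (Finset.range n).filter (fun i => p < 2*(i+1)) = Finset.Ico (p/2) n := by
    ext i; simp only [Finset.mem_filter, Finset.mem_range, Finset.mem_Ico]; omega
  rw [this, Nat.card_Ico]

lemma sumC (ε : Fin (2*n) → Bool) :
    ∑ i ∈ Finset.range n, ((upSet n ε).filter (fun p => p.val < 2*(i+1))).card
      = ∑ p ∈ upSet n ε, (n - p.val/2) := by
  simp_rw [Finset.card_filter]
  rw [Finset.sum_comm]
  refine Finset.sum_congr rfl fun p _ => ?_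
  rw [← Finset.card_filter]
  exact sum_ind n p.val p.isLt

lemma gauss2 (m : ℕ) : ∑ i ∈ Finset.range m, ((2*(i+1) : ℕ) : ℤ) = ((m*m + m : ℕ) : ℤ) := by
  induction m with
  | zero => simp
  | succ k ih => rw [Finset.sum_range_succ, ih]; push_cast; ring

lemma dsigma_eq (hn : 0 < n) (ε : Fin (2*n) → Bool) (hcard : (upSet n ε).card = n) :
    dsigma n ε = ((n*(n-1)/2 : ℕ) : ℤ) - (tStat n (upSet n ε) : ℤ) := by
  obtain ⟨c', hc'⟩ : 2 ∣ n*(n-1) := by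
    rcases Nat.even_or_odd n with h | h
    · exact Dvd.dvd.mul_right h.two_dvd _
    · exact Dvd.dvd.mul_left (Nat.Odd.sub_odd h odd_one).two_dvd _
  have hcdiv : n*(n-1)/2 = c' := by omega
  have hfilt : ∀ i : ℕ, Finset.univ.filter (fun p : Fin (2*n) => p.val < 2*(i+1) ∧ ε p = true)
      = (upSet n ε).filter (fun p => p.val < 2*(i+1)) := by
    intro i; ext p; simp [upSet]; tauto
  have h1 : ∑ i ∈ Finset.range n, wpos n ε (2*(i+1))
      = 2 * ((∑ p ∈ upSet n ε, (n - p.val/2) : ℕ) : ℤ) - (n*n + n : ℕ) := by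
    have := fun (i : ℕ) (hi : i ∈ Finset.range n) =>
      wpos_eq n ε (2*(i+1)) (by have := Finset.mem_range.1 hi; omega)
    rw [Finset.sum_congr rfl this]
    simp_rw [hfilt]
    rw [Finset.sum_sub_distrib, ← Finset.mul_sum, ← Nat.cast_sum, sumC, gauss2]
  have h2 : ((∑ p ∈ upSet n ε, (n - p.val/2) : ℕ) : ℤ)
      = (n:ℤ)*n - (tStat n (upSet n ε) : ℤ) := by
    rw [Nat.cast_sum]
    have : ∀ p ∈ upSet n ε, ((n - p.val/2 : ℕ) : ℤ) = (n:ℤ) - ((p.val/2 : ℕ) : ℤ) := by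
      intro p _
      have : p.val/2 ≤ n := by have := p.isLt; omega
      push_cast [Nat.cast_sub this]
      ring
    rw [Finset.sum_congr rfl this, Finset.sum_sub_distrib, Finset.sum_const, hcard]
    unfold tStat
    push_cast
    ring
  unfold dsigma psig
  rw [h1, h2, hcdiv]
  have hz : (n:ℤ)*n - (n:ℤ) = 2*(c':ℤ) := by
    have h1' : ((n*(n-1) : ℕ) : ℤ) = 2*(c':ℤ) := by exact_mod_cast hc'
    have h2' : ((n-1 : ℕ) : ℤ) = (n:ℤ) - 1 := by
      have : 1 ≤ n := hn
      omega
    rw [Nat.cast_mul, h2'] at h1'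
    linarith [h1']
  have hnum : 2 * ((n:ℤ)*n - (tStat n (upSet n ε) : ℤ)) - ((n*n + n : ℕ) : ℤ)
      = 2 * ((c' : ℤ) - (tStat n (upSet n ε) : ℤ)) := by
    push_cast
    linarith [hz]
  rw [hnum, Int.mul_ediv_cancel_left _ two_ne_zero]

lemma dvd_iff_zmod (hn : 0 < n) (ε : Fin (2*n) → Bool) (hcard : (upSet n ε).card = n) :
    ((n:ℤ) ∣ dsigma n ε) ↔ ((tStat n (upSet n ε) : ZMod n) = ((n*(n-1)/2 : ℕ) : ZMod n)) := by
  rw [dsigma_eq n hn ε hcard, ← ZMod.intCast_zmod_eq_zero_iff_dvd]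
  rw [Int.cast_sub, Int.cast_natCast, Int.cast_natCast, sub_eq_zero, eq_comm]

def finsetEquiv : (Fin (2*n) → Bool) ≃ Finset (Fin (2*n)) where
  toFun ε := upSet n ε
  invFun S := fun i => decide (i ∈ S)
  left_inv ε := by funext i; simp [upSet]
  right_inv S := by ext i; simp [upSet]

lemma key1 (hn : 0 < n) :
    Nat.card {ε : Fin (2*n) → Bool // IsBridge n ε ∧ (n:ℤ) ∣ dsigma n ε}
      = Nat.card {S : Finset (Fin (2*n)) //
          S.card = n ∧ (tStat n S : ZMod n) = ((n*(n-1)/2 : ℕ) : ZMod n)} := by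
  apply Nat.card_congr
  apply Equiv.subtypeEquiv (finsetEquiv n)
  intro ε
  show _ ↔ (upSet n ε).card = n ∧ _
  constructor
  · rintro ⟨hb, hd⟩
    have hcard := (isBridge_iff n ε).1 hb
    exact ⟨hcard, (dvd_iff_zmod n hn ε hcard).1 hd⟩
  · rintro ⟨hcard, hz⟩
    exact ⟨(isBridge_iff n ε).2 hcard, (dvd_iff_zmod n hn ε hcard).2 hz⟩

lemma total_half (m : ℕ) : (∑ i ∈ Finset.range (2*m), i/2) + m = m*m := by
  induction m with
  | zero => simp
  | succ k ih =>
    have h1 : 2*(k+1) = (2*k + 1) + 1 := by ring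
    rw [h1, Finset.sum_range_succ, Finset.sum_range_succ]
    have h2 : (2*k)/2 = k := by omega
    have h3 : (2*k+1)/2 = k := by omega
    rw [h2, h3]
    have h4 : (k+1)*(k+1) = k*k + 2*k + 1 := by ring
    rw [h4]
    omega

lemma tStat_total : ∑ i : Fin (2*n), i.val/2 = n*n - n := by
  rw [Fin.sum_univ_eq_sum_range (fun i => i/2) (2*n)]
  have := total_half n
  omega

lemma tStat_compl (S : Finset (Fin (2*n))) :
    tStat n S + tStat n Sᶜ = n*n - n := by
  classical
  unfold tStat
  rw [Finset.sum_add_sum_compl, tStat_total]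

lemma doubling (hn : 0 < n) :
    Nat.card {S : Finset (Fin (2*n)) //
        S.card = n ∧ (tStat n S : ZMod n) = ((n*(n-1)/2 : ℕ) : ZMod n)}
    = 2 * Nat.card {S : Finset (Fin (2*n)) //
        (S.card = n ∧ (tStat n S : ZMod n) = ((n*(n-1)/2 : ℕ) : ZMod n)) ∧
          (⟨0, by omega⟩ : Fin (2*n)) ∈ S} := by
  classical
  set z : Fin (2*n) := ⟨0, by omega⟩
  set c : ZMod n := ((n*(n-1)/2 : ℕ) : ZMod n) with hc
  set P : Finset (Fin (2*n)) → Prop := fun S => S.card = n ∧ (tStat n S : ZMod n) = c with hP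
  have hcc : c + c = 0 := by
    rw [hc, ← Nat.cast_add]
    have h2 : n*(n-1)/2 + n*(n-1)/2 = n*(n-1) := by
      obtain ⟨c', hc'⟩ : 2 ∣ n*(n-1) := by
        rcases Nat.even_or_odd n with h | h
        · exact Dvd.dvd.mul_right h.two_dvd _
        · exact Dvd.dvd.mul_left (Nat.Odd.sub_odd h odd_one).two_dvd _
      omega
    rw [h2]
    exact (ZMod.natCast_eq_zero_iff _ _).2 ⟨n-1, rfl⟩
  -- compl preserves the conditions, swapping membership of z
  have hPc : ∀ S, P S → P Sᶜ := by
    rintro S ⟨h1, h2⟩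
    constructor
    · rw [Finset.card_compl, Fintype.card_fin, h1]; omega
    · have := tStat_compl n S
      have hcast : ((tStat n S : ZMod n)) + ((tStat n Sᶜ : ZMod n)) = ((n*n - n : ℕ) : ZMod n) := by
        rw [← Nat.cast_add, this]
      have hz0 : ((n*n - n : ℕ) : ZMod n) = 0 := by
        apply (ZMod.natCast_eq_zero_iff _ _).2
        exact ⟨n - 1, by cases n with
          | zero => simp
          | succ k => simp [Nat.succ_sub_one]; ring_nf; omega⟩
      rw [h2, hz0] at hcast
      linear_combination hcast - hcc
  rw [Nat.card_eq_fintype_card, Nat.card_eq_fintype_card, Fintype.card_subtype,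
    Fintype.card_subtype]
  have hsplit := Finset.card_filter_add_card_filter_not
    (s := Finset.univ.filter P) (p := fun S => z ∈ S)
  rw [Finset.filter_filter, Finset.filter_filter] at hsplit
  have hbij : (Finset.univ.filter (fun S => P S ∧ ¬ z ∈ S)).card
      = (Finset.univ.filter (fun S => P S ∧ z ∈ S)).card := by
    apply Finset.card_bij (fun S _ => Sᶜ)
    · intro S hS
      simp only [Finset.mem_filter, Finset.mem_univ, true_and] at hS ⊢
      exact ⟨hPc S hS.1, Finset.mem_compl.2 hS.2⟩
    · intro a _ b _ h
      rw [← compl_compl a, h, compl_compl]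
    · intro T hT
      simp only [Finset.mem_filter, Finset.mem_univ, true_and] at hT ⊢
      exact ⟨Tᶜ, ⟨hPc T hT.1, by simp [hT.2]⟩, by simp⟩
  have hfc : ∀ S : Finset (Fin (2*n)), (P S ∧ z ∈ S) = ((#S = n ∧ (tStat n S : ZMod n) = c) ∧ z ∈ S) := by
    intro S; rw [hP]
  simp only [hP] at hbij hsplit ⊢
  omega

def gNat (p : ℕ) : ℕ :=
  if p = 1 then n - 1 else if p % 2 = 0 then n - 1 - p/2 else 2*n - 1 - p/2

def g'Nat (q : ℕ) : ℕ :=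
  if q = n - 1 then 1 else if q < n - 1 then 2*(n - 1 - q) else 2*(2*n - 1 - q) + 1

lemma gNat_lt {p : ℕ} (hp : p < 2*n) : gNat n p < 2*n - 1 := by
  unfold gNat; split_ifs <;> omega

lemma g'Nat_lt {q : ℕ} (hq : q < 2*n - 1) : g'Nat n q < 2*n := by
  unfold g'Nat; split_ifs <;> omega

lemma g'Nat_ne_zero {q : ℕ} (hq : q < 2*n - 1) : g'Nat n q ≠ 0 := by
  unfold g'Nat; split_ifs <;> omega

lemma gg' {q : ℕ} (hq : q < 2*n - 1) : gNat n (g'Nat n q) = q := by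
  unfold gNat g'Nat; split_ifs <;> omega

lemma g'g {p : ℕ} (hp : p < 2*n) (hp0 : p ≠ 0) : g'Nat n (gNat n p) = p := by
  unfold gNat g'Nat; split_ifs <;> omega

lemma gNat_residue {p : ℕ} (hp : p < 2*n) (hp0 : p ≠ 0) :
    ((gNat n p : ℕ) : ZMod n) = -((p/2 : ℕ) : ZMod n) - 1 := by
  have h : gNat n p + p/2 + 1 = n ∨ gNat n p + p/2 + 1 = 2*n := by
    unfold gNat; split_ifs <;> omega
  have h0 : ((gNat n p + p/2 + 1 : ℕ) : ZMod n) = 0 := by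
    rcases h with h | h <;> rw [h] <;> push_cast <;> simp [ZMod.natCast_self]
  push_cast at h0
  linear_combination h0

def gF (p : Fin (2*n)) : Fin (2*n - 1) :=
  ⟨gNat n p.val, gNat_lt n p.isLt⟩

def gF' (q : Fin (2*n - 1)) : Fin (2*n) :=
  ⟨g'Nat n q.val, g'Nat_lt n q.isLt⟩

lemma gF_gF' (q : Fin (2*n - 1)) : gF n (gF' n q) = q := by
  apply Fin.ext; exact gg' n q.isLt

lemma gF'_gF {p : Fin (2*n)} (hp0 : p.val ≠ 0) : gF' n (gF n p) = p := by
  apply Fin.ext; exact g'g n p.isLt hp0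

lemma gF'_inj : Function.Injective (gF' n) := by
  intro a b h
  rw [← gF_gF' n a, ← gF_gF' n b, h]

lemma nnz (hn : 0 < n) : ((n*n - n : ℕ) : ZMod n) = 0 := by
  apply (ZMod.natCast_eq_zero_iff _ _).2
  exact ⟨n - 1, by cases n with
    | zero => simp
    | succ k => simp [Nat.succ_sub_one]; ring_nf; omega⟩

lemma mem_compl_val_ne (hn : 0 < n) (S : Finset (Fin (2*n)))
    (hz : (⟨0, by omega⟩ : Fin (2*n)) ∈ S) {p : Fin (2*n)} (hp : p ∈ Sᶜ) : p.val ≠ 0 := by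
  intro h0
  have : p = ⟨0, by omega⟩ := Fin.ext h0
  rw [this] at hp
  exact (Finset.mem_compl.1 hp) hz

lemma image_injOn (hn : 0 < n) (S : Finset (Fin (2*n)))
    (hz : (⟨0, by omega⟩ : Fin (2*n)) ∈ S) :
    ∀ a ∈ Sᶜ, ∀ b ∈ Sᶜ, gF n a = gF n b → a = b := by
  intro a ha b hb h
  rw [← gF'_gF n (mem_compl_val_ne n hn S hz ha), ← gF'_gF n (mem_compl_val_ne n hn S hz hb), h]

lemma image_sum (hn : 0 < n) (S : Finset (Fin (2*n)))
    (hz : (⟨0, by omega⟩ : Fin (2*n)) ∈ S) (hcard : S.card = n) :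
    ((∑ t ∈ Sᶜ.image (gF n), t.val : ℕ) : ZMod n) = (tStat n S : ZMod n) := by
  classical
  rw [Nat.cast_sum, Finset.sum_image (image_injOn n hn S hz)]
  have hterm : ∀ p ∈ Sᶜ, (((gF n p).val : ℕ) : ZMod n) = -((p.val/2 : ℕ) : ZMod n) - 1 := by
    intro p hp
    exact gNat_residue n p.isLt (mem_compl_val_ne n hn S hz hp)
  rw [Finset.sum_congr rfl hterm, Finset.sum_sub_distrib, Finset.sum_neg_distrib,
    Finset.sum_const]
  have hcc' : Sᶜ.card = n := by
    rw [Finset.card_compl, Fintype.card_fin, hcard]; omega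
  have ht' : ((tStat n S : ZMod n)) + ((tStat n Sᶜ : ZMod n)) = 0 := by
    rw [← Nat.cast_add, tStat_compl, nnz n hn]
  have hts : ((tStat n Sᶜ : ℕ) : ZMod n) = ∑ p ∈ Sᶜ, ((p.val/2 : ℕ) : ZMod n) := by
    unfold tStat; rw [Nat.cast_sum]
  rw [hcc', ← hts]
  simp [ZMod.natCast_self]
  linear_combination -ht'

lemma step5 (hn : 0 < n) :
    Nat.card {S : Finset (Fin (2*n)) //
        (S.card = n ∧ (tStat n S : ZMod n) = ((n*(n-1)/2 : ℕ) : ZMod n)) ∧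
          (⟨0, by omega⟩ : Fin (2*n)) ∈ S}
    = Nat.card {T : Finset (Fin (2*n - 1)) //
        T.card = n ∧ ((∑ t ∈ T, t.val : ℕ) : ZMod n) = ((n*(n-1)/2 : ℕ) : ZMod n)} := by
  classical
  apply Nat.card_congr
  refine Equiv.mk (fun x => ⟨x.1ᶜ.image (gF n), ?_⟩)
    (fun y => ⟨(y.1.image (gF' n))ᶜ, ?_⟩) ?_ ?_
  · obtain ⟨S, ⟨⟨hcard, hsum⟩, hz⟩⟩ := x
    constructor
    · rw [Finset.card_image_of_injOn (image_injOn n hn S hz), Finset.card_compl,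
        Fintype.card_fin, hcard]
      omega
    · rw [image_sum n hn S hz hcard, hsum]
  · obtain ⟨T, ⟨hcard, hsum⟩⟩ := y
    set S : Finset (Fin (2*n)) := (T.image (gF' n))ᶜ with hSdef
    have hz : (⟨0, by omega⟩ : Fin (2*n)) ∈ S := by
      rw [hSdef, Finset.mem_compl]
      intro hmem
      obtain ⟨q, _, hq⟩ := Finset.mem_image.1 hmem
      exact g'Nat_ne_zero n q.isLt (congrArg Fin.val hq)
    have hScard : S.card = n := by
      rw [hSdef, Finset.card_compl, Fintype.card_fin,
        Finset.card_image_of_injective _ (gF'_inj n), hcard]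
      omega
    have hT : Sᶜ.image (gF n) = T := by
      rw [hSdef, compl_compl, Finset.image_image]
      have : ∀ q ∈ T, (gF n ∘ gF' n) q = id q := fun q _ => gF_gF' n q
      rw [Finset.image_congr this, Finset.image_id]
    have hs := image_sum n hn S hz hScard
    rw [hT, hsum] at hs
    exact ⟨⟨hScard, hs.symm⟩, hz⟩
  · rintro ⟨S, ⟨⟨hcard, hsum⟩, hz⟩⟩
    apply Subtype.ext
    show ((Sᶜ.image (gF n)).image (gF' n))ᶜ = S
    rw [Finset.image_image]
    have : ∀ p ∈ Sᶜ, (gF' n ∘ gF n) p = id p := fun p hp =>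
      gF'_gF n (mem_compl_val_ne n hn S hz hp)
    rw [Finset.image_congr this, Finset.image_id, compl_compl]
  · rintro ⟨T, ⟨hcard, hsum⟩⟩
    apply Subtype.ext
    show ((T.image (gF' n))ᶜ)ᶜ.image (gF n) = T
    rw [compl_compl, Finset.image_image]
    have : ∀ q ∈ T, (gF n ∘ gF' n) q = id q := fun q _ => gF_gF' n q
    rw [Finset.image_congr this, Finset.image_id]

end aux

/-- bars-before map -/
def rmapBB (A : Finset ℕ) : Multiset ℕ := A.val.map (fun t => t - (A.filter (· < t)).card)

lemma cnt_max' (A : Finset ℕ) (hA : A.Nonempty) :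
    (A.filter (· < A.max' hA)).card = A.card - 1 := by
  have : A.filter (· < A.max' hA) = A.erase (A.max' hA) := by
    ext u
    simp only [Finset.mem_filter, Finset.mem_erase]
    constructor
    · rintro ⟨hu, hlt⟩; exact ⟨by omega, hu⟩
    · rintro ⟨hne, hu⟩
      exact ⟨hu, lt_of_le_of_ne (Finset.le_max' A u hu) hne⟩
  rw [this, Finset.card_erase_of_mem (A.max'_mem hA)]

lemma cnt_erase_max' (A : Finset ℕ) (hA : A.Nonempty) {t : ℕ} (ht : t ∈ A.erase (A.max' hA)) :
    ((A.erase (A.max' hA)).filter (· < t)).card = (A.filter (· < t)).card := by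
  congr 1
  ext u
  simp only [Finset.mem_filter, Finset.mem_erase]
  have hta : t ≠ A.max' hA := (Finset.mem_erase.1 ht).1
  have htA : t ∈ A := (Finset.mem_erase.1 ht).2
  have : t ≤ A.max' hA := Finset.le_max' A t htA
  constructor
  · rintro ⟨⟨_, hu⟩, hlt⟩; exact ⟨hu, hlt⟩
  · rintro ⟨hu, hlt⟩
    exact ⟨⟨by omega, hu⟩, hlt⟩

lemma rmap_le (A : Finset ℕ) (hA : A.Nonempty) {t : ℕ} (ht : t ∈ A) :
    t - (A.filter (· < t)).card ≤ A.max' hA - (A.card - 1) := by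
  set a := A.max' hA
  have h1 : (A.filter (· < t)).card + 1 + (A.filter (fun u => t < u)).card = A.card := by
    have hsplit := Finset.card_filter_add_card_filter_not
      (s := A) (p := fun u => u < t)
    have : A.filter (fun u => ¬ u < t) = insert t (A.filter (fun u => t < u)) := by
      ext u
      simp only [Finset.mem_filter, Finset.mem_insert]
      constructor
      · rintro ⟨hu, hnlt⟩
        rcases Nat.lt_or_ge t u with h | h
        · exact Or.inr ⟨hu, h⟩
        · exact Or.inl (by omega)
      · rintro (rfl | ⟨hu, hlt⟩)
        · exact ⟨ht, by omega⟩
        · exact ⟨hu, by omega⟩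
    rw [this, Finset.card_insert_of_notMem (by simp)] at hsplit
    omega
  have h2 : (A.filter (fun u => t < u)).card ≤ a - t := by
    have hsub : A.filter (fun u => t < u) ⊆ Finset.Ioc t a := by
      intro u hu
      simp only [Finset.mem_filter] at hu
      exact Finset.mem_Ioc.2 ⟨hu.2, Finset.le_max' A u hu.1⟩
    calc (A.filter (fun u => t < u)).card ≤ (Finset.Ioc t a).card := Finset.card_le_card hsub
    _ = a - t := Nat.card_Ioc t a
  have hta : t ≤ a := Finset.le_max' A t ht
  have hcard1 : 1 ≤ A.card := Finset.card_pos.2 ⟨t, ht⟩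
  omega

lemma max'_ge_card (A : Finset ℕ) (hA : A.Nonempty) : A.card ≤ A.max' hA + 1 := by
  have hsub : A ⊆ Finset.range (A.max' hA + 1) := fun u hu =>
    Finset.mem_range.2 (by have := Finset.le_max' A u hu; omega)
  have := Finset.card_le_card hsub
  rwa [Finset.card_range] at this

lemma rmap_sup (A : Finset ℕ) (hA : A.Nonempty) :
    (rmapBB A).sup = A.max' hA - (A.card - 1) := by
  apply le_antisymm
  · apply Multiset.sup_le.2
    intro x hx
    obtain ⟨t, ht, rfl⟩ := Multiset.mem_map.1 hx
    exact rmap_le A hA ht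
  · apply Multiset.le_sup
    apply Multiset.mem_map.2
    exact ⟨A.max' hA, A.max'_mem hA, by rw [cnt_max']⟩

lemma rmap_erase (A : Finset ℕ) (hA : A.Nonempty) :
    rmapBB (A.erase (A.max' hA)) = (rmapBB A).erase (A.max' hA - (A.card - 1)) := by
  unfold rmapBB
  have h1 : (A.erase (A.max' hA)).val.map
      (fun t => t - ((A.erase (A.max' hA)).filter (· < t)).card)
      = (A.erase (A.max' hA)).val.map (fun t => t - (A.filter (· < t)).card) := by
    apply Multiset.map_congr rfl
    intro t ht
    rw [cnt_erase_max' A hA ht]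
  rw [h1, Finset.erase_val, Multiset.map_erase_of_mem _ _ (by exact A.max'_mem hA)]
  rw [cnt_max']

lemma rmap_inj : ∀ (N : ℕ) (A B : Finset ℕ), A.card = N → B.card = N → rmapBB A = rmapBB B → A = B := by
  intro N
  induction N with
  | zero =>
    intro A B hA hB _
    rw [Finset.card_eq_zero] at hA hB
    rw [hA, hB]
  | succ k ih =>
    intro A B hA hB hr
    have hAne : A.Nonempty := Finset.card_pos.1 (by omega)
    have hBne : B.Nonempty := Finset.card_pos.1 (by omega)
    have hsup : A.max' hAne - (A.card - 1) = B.max' hBne - (B.card - 1) := by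
      rw [← rmap_sup A hAne, ← rmap_sup B hBne, hr]
    have hab : A.max' hAne = B.max' hBne := by
      have h1 := max'_ge_card A hAne
      have h2 := max'_ge_card B hBne
      omega
    have herase : A.erase (A.max' hAne) = B.erase (B.max' hBne) := by
      apply ih
      · rw [Finset.card_erase_of_mem (A.max'_mem hAne)]; omega
      · rw [Finset.card_erase_of_mem (B.max'_mem hBne)]; omega
      · rw [rmap_erase A hAne, rmap_erase B hBne, hr, hsup]
    calc A = insert (A.max' hAne) (A.erase (A.max' hAne)) :=
          (Finset.insert_erase (A.max'_mem hAne)).symm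
      _ = insert (B.max' hBne) (B.erase (B.max' hBne)) := by rw [herase, hab]
      _ = B := Finset.insert_erase (B.max'_mem hBne)

lemma ranksum : ∀ (N : ℕ) (A : Finset ℕ), A.card = N →
    2 * (∑ t ∈ A, (A.filter (· < t)).card) = N * (N - 1) := by
  intro N
  induction N with
  | zero =>
    intro A hA
    rw [Finset.card_eq_zero] at hA
    subst hA; simp
  | succ k ih =>
    intro A hA
    have hAne : A.Nonempty := Finset.card_pos.1 (by omega)
    set a := A.max' hAne with ha
    have hmem := A.max'_mem hAne
    have h1 : ∑ t ∈ A, (A.filter (· < t)).card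
        = ∑ t ∈ A.erase a, (A.filter (· < t)).card + (A.filter (· < a)).card := by
      rw [← Finset.sum_erase_add A _ hmem]
    have h2 : ∑ t ∈ A.erase a, (A.filter (· < t)).card
        = ∑ t ∈ A.erase a, ((A.erase a).filter (· < t)).card := by
      refine Finset.sum_congr rfl fun t ht => ?_
      rw [cnt_erase_max' A hAne ht]
    have h3 := ih (A.erase a) (by rw [Finset.card_erase_of_mem hmem]; omega)
    rw [h1, h2, cnt_max']
    have hk : A.card - 1 = k := by omega
    rw [hk] at *
    have : (k+1) * ((k+1) - 1) = k * (k-1) + 2*k := by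
      cases k with
      | zero => simp
      | succ j => simp only [Nat.succ_sub_one]; ring
    omega

section sym
variable (n : ℕ)

def valEmb : Fin (2*n-1) ↪ ℕ := ⟨Fin.val, Fin.val_injective⟩

lemma cnt_eq (T : Finset (Fin (2*n-1))) (t : Fin (2*n-1)) :
    ((T.map (valEmb n)).filter (· < t.val)).card = (T.filter (· < t)).card := by
  have : (T.map (valEmb n)).filter (· < t.val) = (T.filter (· < t)).map (valEmb n) := by
    ext u
    simp only [Finset.mem_filter, Finset.mem_map, valEmb, Function.Embedding.coeFn_mk,
      Fin.lt_def]
    constructor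
    · rintro ⟨⟨a, ha, rfl⟩, hlt⟩
      exact ⟨a, ⟨ha, hlt⟩, rfl⟩
    · rintro ⟨a, ⟨ha, hlt⟩, rfl⟩
      exact ⟨⟨a, ha, rfl⟩, hlt⟩
  rw [this, Finset.card_map]

lemma bnd (hn : 0 < n) (T : Finset (Fin (2*n-1))) (hT : T.card = n) {t : Fin (2*n-1)}
    (ht : t ∈ T) : t.val - (T.filter (· < t)).card < n := by
  classical
  set A := T.map (valEmb n) with hA
  have hAcard : A.card = n := by rw [hA, Finset.card_map, hT]
  have hAsub : A ⊆ Finset.range (2*n-1) := by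
    intro u hu
    obtain ⟨a, _, rfl⟩ := Finset.mem_map.1 hu
    exact Finset.mem_range.2 a.isLt
  have h1 : (Finset.range t.val).filter (· ∈ A) = A.filter (· < t.val) := by
    ext u
    simp only [Finset.mem_filter, Finset.mem_range]
    tauto
  have hsplit := Finset.card_filter_add_card_filter_not
    (s := Finset.range t.val) (p := fun u => u ∈ A)
  rw [Finset.card_range] at hsplit
  have h2 : (Finset.range t.val).filter (fun u => ¬ u ∈ A) ⊆ Finset.range (2*n-1) \ A := by
    intro u hu
    simp only [Finset.mem_filter, Finset.mem_range, Finset.mem_sdiff] at hu ⊢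
    have := t.isLt
    exact ⟨by omega, hu.2⟩
  have h3 : (Finset.range (2*n-1) \ A).card = 2*n-1 - n := by
    rw [Finset.card_sdiff_of_subset hAsub, Finset.card_range, hAcard]
  have h4 := Finset.card_le_card h2
  have h5 := cnt_eq n T t
  rw [← hA] at h5
  rw [h1] at hsplit
  omega

def phi (hn : 0 < n) (x : {T : Finset (Fin (2*n-1)) // T.card = n}) : Sym (Fin n) n :=
  ⟨x.1.attach.val.map
      (fun t => (⟨t.1.val - (x.1.filter (· < t.1)).card, bnd n hn x.1 x.2 t.2⟩ : Fin n)),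
   by rw [Multiset.card_map]; exact (Finset.card_attach).trans x.2⟩

lemma phi_val (hn : 0 < n) (x : {T : Finset (Fin (2*n-1)) // T.card = n}) :
    ((phi n hn x : Sym (Fin n) n) : Multiset (Fin n)).map Fin.val
      = rmapBB (x.1.map (valEmb n)) := by
  show (x.1.attach.val.map _).map Fin.val = _
  rw [Multiset.map_map]
  have h1 : x.1.attach.val.map
      (Fin.val ∘ (fun t : {a // a ∈ x.1} =>
        (⟨t.1.val - (x.1.filter (· < t.1)).card, bnd n hn x.1 x.2 t.2⟩ : Fin n)))
      = x.1.attach.val.map ((fun a : Fin (2*n-1) => a.val - (x.1.filter (· < a)).card) ∘ Subtype.val) := by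
    apply Multiset.map_congr rfl
    intro t _
    rfl
  rw [h1, ← Multiset.map_map, Finset.attach_val, Multiset.attach_map_val]
  unfold rmapBB
  rw [Finset.map_val, Multiset.map_map]
  apply Multiset.map_congr rfl
  intro t ht
  congr 1
  exact (cnt_eq n x.1 t).symm

lemma phi_inj (hn : 0 < n) : Function.Injective (phi n hn) := by
  intro x y h
  have hm : rmapBB (x.1.map (valEmb n)) = rmapBB (y.1.map (valEmb n)) := by
    rw [← phi_val n hn, ← phi_val n hn, h]
  have := rmap_inj n _ _ (by rw [Finset.card_map]; exact x.2) (by rw [Finset.card_map]; exact y.2) hm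
  exact Subtype.ext (Finset.map_injective (valEmb n) this)

lemma card_eq_sym (hn : 0 < n) :
    Fintype.card {T : Finset (Fin (2*n-1)) // T.card = n} = Fintype.card (Sym (Fin n) n) := by
  rw [Fintype.card_finset_len, Fintype.card_fin, Sym.card_sym_eq_multichoose,
    Nat.multichoose_eq, Fintype.card_fin]
  congr 1
  omega

lemma step6 (hn : 0 < n) :
    Nat.card {T : Finset (Fin (2*n - 1)) //
        T.card = n ∧ ((∑ t ∈ T, t.val : ℕ) : ZMod n) = ((n*(n-1)/2 : ℕ) : ZMod n)}
    = Nat.card {s : Sym (Fin n) n // ((s : Multiset (Fin n)).map Fin.val).sum % n = 0} := by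
  classical
  have hbij : Function.Bijective (phi n hn) :=
    (Fintype.bijective_iff_injective_and_card _).2 ⟨phi_inj n hn, card_eq_sym n hn⟩
  have hiff : ∀ x : {T : Finset (Fin (2*n-1)) // T.card = n},
      (((∑ t ∈ x.1, t.val : ℕ) : ZMod n) = ((n*(n-1)/2 : ℕ) : ZMod n)) ↔
      ((((phi n hn x) : Sym (Fin n) n) : Multiset (Fin n)).map Fin.val).sum % n = 0 := by
    intro x
    set A := x.1.map (valEmb n) with hA
    have hAcard : A.card = n := by rw [hA, Finset.card_map, x.2]
    have hM : ((((phi n hn x) : Sym (Fin n) n) : Multiset (Fin n)).map Fin.val).sum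
        = ∑ a ∈ A, (a - (A.filter (· < a)).card) := by
      rw [phi_val n hn x]
      rfl
    have hterm : ∀ a ∈ A, (a - (A.filter (· < a)).card) + (A.filter (· < a)).card = a := by
      intro a _
      have : (A.filter (· < a)).card ≤ a := by
        calc (A.filter (· < a)).card ≤ (Finset.range a).card := by
              apply Finset.card_le_card
              intro u hu
              simp only [Finset.mem_filter] at hu
              exact Finset.mem_range.2 hu.2
          _ = a := Finset.card_range a
      omega
    have hranksum := ranksum n A hAcard
    have hsum2 : (∑ a ∈ A, (a - (A.filter (· < a)).card)) + n*(n-1)/2 = ∑ a ∈ A, a := by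
      have := Finset.sum_congr rfl hterm
      rw [Finset.sum_add_distrib] at this
      omega
    have hsumA : ∑ a ∈ A, a = ∑ t ∈ x.1, t.val := by
      rw [hA, Finset.sum_map]
      rfl
    rw [hM]
    set M := ∑ a ∈ A, (a - (A.filter (· < a)).card) with hMdef
    have hmod : M % n = 0 ↔ ((M : ℕ) : ZMod n) = 0 := by
      rw [ZMod.natCast_eq_zero_iff]
      omega
    rw [hmod]
    have hcast : ((M : ℕ) : ZMod n) + ((n*(n-1)/2 : ℕ) : ZMod n) = ((∑ t ∈ x.1, t.val : ℕ) : ZMod n) := by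
      rw [← Nat.cast_add, hsum2, hsumA]
    constructor
    · intro h
      linear_combination hcast + h
    · intro h
      linear_combination h - hcast
  calc Nat.card {T : Finset (Fin (2*n - 1)) //
        T.card = n ∧ ((∑ t ∈ T, t.val : ℕ) : ZMod n) = ((n*(n-1)/2 : ℕ) : ZMod n)}
      = Nat.card {x : {T : Finset (Fin (2*n-1)) // T.card = n} //
          ((∑ t ∈ x.1, t.val : ℕ) : ZMod n) = ((n*(n-1)/2 : ℕ) : ZMod n)} :=
        Nat.card_congr (Equiv.subtypeSubtypeEquivSubtypeInter _ _).symm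
    _ = Nat.card {s : Sym (Fin n) n // ((s : Multiset (Fin n)).map Fin.val).sum % n = 0} :=
        Nat.card_congr ((Equiv.ofBijective _ hbij).subtypeEquiv hiff)

end sym

theorem bridges_eq_two_trees (n : ℕ) (hn : 0 < n) :
    Nat.card {ε : Fin (2 * n) → Bool // IsBridge n ε ∧ (n : ℤ) ∣ dsigma n ε} =
      2 * planeTreeT n := by
  rw [key1 n hn, doubling n hn, step5 n hn, step6 n hn]
  rfl
end
end

section
/- In the bijection splitting a bridge B of length 2n into its odd-step walk and even-step walk and rotating both into monotone lattice paths, if the odd-step walk ends at height ℓ - (n-ℓ) (i.e., the first lattice path L_1 ends at (n-ℓ, ℓ)), then the concatenated lattice path L from (0,0) to (n,n) satisfies α(L) = σ(B) + ℓn; in particular α(L) ≡ σ(B) mod n. -/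
open Finset Filter Topology

noncomputable section

/-! ### Auxiliary lemmas for `bijection_area_relation` -/

private def pS (f : ℕ → ℤ) (k : ℕ) : ℤ := ∑ j ∈ Finset.range k, f j

private lemma pS_succ (f : ℕ → ℤ) (k : ℕ) : pS f (k+1) = pS f k + f k :=
  Finset.sum_range_succ f k

private lemma sum_pS_succ (f : ℕ → ℤ) (n : ℕ) :
    ∑ i ∈ Finset.range n, pS f (i+1) = (∑ i ∈ Finset.range n, pS f i) + pS f n := by
  induction n with
  | zero => simp [pS]
  | succ n ih =>
    rw [Finset.sum_range_succ, ih, Finset.sum_range_succ (f := pS f)]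

private lemma half_id (f : ℕ → ℤ) (n : ℕ) (h : ∀ i, i < n → f i = 1 ∨ f i = -1) :
    2 * ∑ i ∈ Finset.range n, (1 - f i) * ((i:ℤ) + pS f i)
      = (n:ℤ)^2 + 4 * (∑ i ∈ Finset.range n, pS f i) - 2*n*pS f n + 2*pS f n - (pS f n)^2 := by
  induction n with
  | zero => simp [pS]
  | succ n ih =>
    have hn := ih (fun i hi => h i (by omega))
    have he := h n (by omega)
    rw [Finset.sum_range_succ, Finset.sum_range_succ (f := pS f), pS_succ]
    push_cast
    rcases he with he | he <;> rw [he] <;> linear_combination hn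

private lemma ups_eq {N : ℕ} (g : Fin N → Bool)
    (G : ℕ → ℤ) (hG : ∀ (m : ℕ) (h : m < N), G m = if g ⟨m, h⟩ then 1 else -1)
    (i : Fin N) :
    2 * (upsBefore g i : ℤ) = (i:ℤ) + pS G i := by
  classical
  have hU : (upsBefore g i : ℤ)
      = ∑ j : Fin N, (if ((j:ℕ) < (i:ℕ) ∧ g j = true) then (1:ℤ) else 0) := by
    rw [Finset.sum_boole, upsBefore, Nat.card_eq_fintype_card, Fintype.card_subtype]
    norm_num
  have hext : ∀ (f : ℕ → ℤ), ∑ j ∈ Finset.range (i:ℕ), f j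
      = ∑ j : Fin N, (if (j:ℕ) < (i:ℕ) then f j else 0) := by
    intro f
    rw [Fin.sum_univ_eq_sum_range (fun j => if j < (i:ℕ) then f j else 0) N]
    rw [← Finset.sum_subset (Finset.range_subset_range.2 (le_of_lt i.isLt))]
    · exact Finset.sum_congr rfl (fun j hj => by rw [if_pos (Finset.mem_range.1 hj)])
    · intro j _ hj
      rw [if_neg (by simpa using hj)]
  have hS : pS G (i:ℕ)
      = ∑ j : Fin N, (if (j:ℕ) < (i:ℕ) then (if g j then (1:ℤ) else -1) else 0) := by
    rw [pS, hext]
    exact Finset.sum_congr rfl (fun j _ => by rw [hG j j.isLt, Fin.eta])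
  have hc : ∑ j : Fin N, (if (j:ℕ) < (i:ℕ) then (1:ℤ) else 0) = (i:ℤ) := by
    rw [← hext (fun _ => (1:ℤ))]
    simp
  rw [hU, hS, Finset.mul_sum, ← hc, ← Finset.sum_add_distrib]
  apply Finset.sum_congr rfl
  intro j _
  by_cases h1 : (j:ℕ) < (i:ℕ) <;> cases h2 : g j <;> simp [h1, h2]

private lemma pathArea_eq {N : ℕ} (g : Fin N → Bool)
    (G : ℕ → ℤ) (hG : ∀ (m : ℕ) (h : m < N), G m = if g ⟨m, h⟩ then 1 else -1) :
    4 * (pathArea g : ℤ) = ∑ m ∈ Finset.range N, (1 - G m) * ((m:ℤ) + pS G m) := by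
  classical
  have h1 : (pathArea g : ℤ) = ∑ i : Fin N, (if g i = false then (upsBefore g i : ℤ) else 0) := by
    rw [pathArea]
    push_cast
    exact Finset.sum_congr rfl (fun i _ => by split <;> simp)
  rw [h1, Finset.mul_sum]
  rw [← Fin.sum_univ_eq_sum_range (fun m => (1 - G m) * ((m:ℤ) + pS G m)) N]
  apply Finset.sum_congr rfl
  intro i _
  have hGi : G (i:ℕ) = if g i then 1 else -1 := by rw [hG i i.isLt, Fin.eta]
  cases h2 : g i
  · rw [if_pos rfl, hGi, h2]
    have := ups_eq g G hG i
    push_cast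
    linarith [this]
  · rw [if_neg (by simp [h2]), hGi, h2]
    simp

theorem bijection_area_relation (n : ℕ) (hn : 0 < n) (ε : Fin (2 * n) → Bool)
    (hB : IsBridge n ε)
    (ℓ : ℕ)
    (hℓ : ℓ = Nat.card {j : Fin n // ε ⟨2 * (j : ℕ), by have := j.isLt; omega⟩ = true})
    (g : Fin (2 * n) → Bool)
    (hg : ∀ i : Fin (2 * n),
      g i = if h : (i : ℕ) < n then ε ⟨2 * (i : ℕ), by omega⟩
            else ε ⟨2 * ((i : ℕ) - n) + 1, by have := i.isLt; omega⟩) :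
    (pathArea g : ℤ) = dsigma n ε + (ℓ : ℤ) * n := by
  classical
  set A : ℕ → ℤ := fun i => stepVal n ε (2*i) with hAdef
  set Bs : ℕ → ℤ := fun i => stepVal n ε (2*i+1) with hBdef
  have hA1 : ∀ i, i < n → A i = 1 ∨ A i = -1 := by
    intro i hi
    have h2 : 2*i < 2*n := by omega
    simp only [hAdef, stepVal, dif_pos h2]
    cases hb : ε ⟨2*i, h2⟩ <;> simp [hb]
  have hB1 : ∀ i, i < n → Bs i = 1 ∨ Bs i = -1 := by
    intro i hi
    have h2 : 2*i+1 < 2*n := by omega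
    simp only [hBdef, stepVal, dif_pos h2]
    cases hb : ε ⟨2*i+1, h2⟩ <;> simp [hb]
  have hw : ∀ k, wpos n ε (2*k) = pS A k + pS Bs k := by
    intro k
    induction k with
    | zero => simp [wpos, pS]
    | succ k ih =>
      have h2 : 2*(k+1) = (2*k) + 1 + 1 := by ring
      rw [h2]
      unfold wpos at ih ⊢
      rw [Finset.sum_range_succ, Finset.sum_range_succ, ih, pS_succ, pS_succ]
      have ha : A k = stepVal n ε (2*k) := rfl
      have hb : Bs k = stepVal n ε (2*k+1) := rfl
      rw [ha, hb]; ring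
  have hbr : pS A n + pS Bs n = 0 := by rw [← hw]; exact hB
  -- the value of `pS A n` in terms of `ℓ`
  have hSA : pS A n = 2 * (ℓ:ℤ) - n := by
    have hcard : (ℓ:ℤ) = ∑ j : Fin n,
        (if ε ⟨2 * (j:ℕ), by have := j.isLt; omega⟩ = true then (1:ℤ) else 0) := by
      rw [Finset.sum_boole, hℓ, Nat.card_eq_fintype_card, Fintype.card_subtype]
    have hthis : pS A n = ∑ j : Fin n, stepVal n ε (2 * (j:ℕ)) := by
      rw [hAdef, pS, ← Fin.sum_univ_eq_sum_range (fun i => stepVal n ε (2*i)) n]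
    rw [hthis]
    have key : ∑ j : Fin n, stepVal n ε (2 * (j:ℕ))
        = (∑ j : Fin n, 2 * (if ε ⟨2 * (j:ℕ), by have := j.isLt; omega⟩ = true then (1:ℤ) else 0))
          - ∑ _j : Fin n, (1:ℤ) := by
      rw [← Finset.sum_sub_distrib]
      apply Finset.sum_congr rfl
      intro j _
      have h2 : 2*(j:ℕ) < 2*n := by have := j.isLt; omega
      simp only [stepVal, dif_pos h2]
      by_cases hb : ε ⟨2*(j:ℕ), h2⟩ = true <;> simp [hb]
    rw [key, ← Finset.mul_sum, ← hcard]
    simp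
  have hSB : pS Bs n = (n:ℤ) - 2 * ℓ := by linarith
  -- dsigma
  have hD : 2 * dsigma n ε
      = (∑ i ∈ Finset.range n, pS A i) + pS A n + ((∑ i ∈ Finset.range n, pS Bs i) + pS Bs n) := by
    have heven : (2:ℤ) ∣ ∑ i ∈ Finset.range n, wpos n ε (2*(i+1)) := by
      apply Finset.dvd_sum
      intro i hi
      rw [hw]
      have hsum : pS A (i+1) + pS Bs (i+1) = ∑ j ∈ Finset.range (i+1), (A j + Bs j) := by
        rw [pS, pS, ← Finset.sum_add_distrib]
      rw [hsum]
      apply Finset.dvd_sum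
      intro j hj
      have hj' : j < n := by
        have := Finset.mem_range.1 hi
        have := Finset.mem_range.1 hj
        omega
      rcases hA1 j hj' with h | h <;> rcases hB1 j hj' with h' | h' <;>
        rw [h, h'] <;> decide
    have h1 : 2 * dsigma n ε = ∑ i ∈ Finset.range n, wpos n ε (2*(i+1)) := by
      rw [dsigma, psig]
      exact Int.mul_ediv_cancel' heven
    rw [h1]
    have h2 : ∑ i ∈ Finset.range n, wpos n ε (2*(i+1))
        = ∑ i ∈ Finset.range n, (pS A (i+1) + pS Bs (i+1)) :=
      Finset.sum_congr rfl (fun i _ => hw (i+1))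
    rw [h2, Finset.sum_add_distrib, sum_pS_succ, sum_pS_succ]
  -- the path increments
  set G : ℕ → ℤ := fun m => if h : m < 2*n then (if g ⟨m, h⟩ then 1 else -1) else 0 with hGdef
  have hG : ∀ (m : ℕ) (h : m < 2*n), G m = if g ⟨m, h⟩ then 1 else -1 := by
    intro m h
    simp only [hGdef, dif_pos h]
  have hGA : ∀ m, m < n → G m = A m := by
    intro m hm
    have h1 : m < 2*n := by omega
    rw [hG m h1, hg ⟨m, h1⟩]
    simp only [dif_pos hm]
    have h2 : 2*m < 2*n := by omega
    simp only [hAdef, stepVal, dif_pos h2]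
  have hGB : ∀ t, t < n → G (n + t) = Bs t := by
    intro t ht
    have h1 : n + t < 2*n := by omega
    rw [hG (n+t) h1, hg ⟨n+t, h1⟩]
    have h3 : ¬ ((⟨n+t, h1⟩ : Fin (2*n)) : ℕ) < n := by simp
    rw [dif_neg h3]
    have h4 : ((⟨n+t, h1⟩ : Fin (2*n)) : ℕ) - n = t := by simp
    have h2 : 2*t+1 < 2*n := by omega
    simp only [hBdef, stepVal, dif_pos h2, h4]
  have hpSGA : ∀ m, m ≤ n → pS G m = pS A m := by
    intro m hm
    exact Finset.sum_congr rfl (fun j hj => hGA j (by have := Finset.mem_range.1 hj; omega))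
  have hpSGB : ∀ t, t ≤ n → pS G (n+t) = pS A n + pS Bs t := by
    intro t ht
    rw [pS, Finset.sum_range_add G n t]
    rw [show ∑ x ∈ Finset.range n, G x = pS G n from rfl, hpSGA n le_rfl]
    congr 1
    exact Finset.sum_congr rfl (fun s hs => hGB s (by have := Finset.mem_range.1 hs; omega))
  -- 4 * pathArea
  have hPA : 4 * (pathArea g : ℤ)
      = (∑ i ∈ Finset.range n, (1 - A i) * ((i:ℤ) + pS A i))
        + ∑ t ∈ Finset.range n, (1 - Bs t) * (((n:ℤ) + (t:ℤ)) + (pS A n + pS Bs t)) := by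
    rw [pathArea_eq g G hG]
    rw [show 2*n = n + n from by ring, Finset.sum_range_add]
    congr 1
    · apply Finset.sum_congr rfl
      intro i hi
      have hi' : i < n := Finset.mem_range.1 hi
      rw [hGA i hi', hpSGA i (le_of_lt hi')]
    · apply Finset.sum_congr rfl
      intro t ht
      have ht' : t < n := Finset.mem_range.1 ht
      rw [hGB t ht', hpSGB t (le_of_lt ht')]
      push_cast
      ring
  -- split the second sum
  have hsplit : ∑ t ∈ Finset.range n, (1 - Bs t) * (((n:ℤ) + (t:ℤ)) + (pS A n + pS Bs t))
      = (∑ t ∈ Finset.range n, (1 - Bs t) * ((t:ℤ) + pS Bs t))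
        + ((n:ℤ) + pS A n) * ((n:ℤ) - pS Bs n) := by
    have h1 : ∀ t ∈ Finset.range n, (1 - Bs t) * (((n:ℤ) + (t:ℤ)) + (pS A n + pS Bs t))
        = (1 - Bs t) * ((t:ℤ) + pS Bs t) + (((n:ℤ) + pS A n) - ((n:ℤ) + pS A n) * Bs t) := by
      intro t _
      ring
    rw [Finset.sum_congr rfl h1, Finset.sum_add_distrib]
    congr 1
    rw [Finset.sum_sub_distrib, Finset.sum_const, Finset.card_range, ← Finset.mul_sum]
    rw [show ∑ t ∈ Finset.range n, Bs t = pS Bs n from rfl]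
    ring
  have hhA := half_id A n hA1
  have hhB := half_id Bs n hB1
  -- final computation
  have hfinal : 2 * (4 * (pathArea g : ℤ)) = 2 * (4 * dsigma n ε + 4 * (ℓ:ℤ) * n) := by
    rw [hPA, hsplit]
    rw [hSA] at hhA hD ⊢
    rw [hSB] at hhB hD ⊢
    linear_combination hhA + hhB - 4 * hD
  linarith
end
end

section
/- T_n is even for all n ≥ 2, where T_n = (1/n)·sum over d|n of binomial(2d-1,d)·φ(n/d); equivalently, the number of size-n submultisets of {0,...,n-1} summing to 0 mod n is even for n ≥ 2. -/
open Finset Filter Topology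

noncomputable section

/-!
Reflection `x ↦ n - 1 - x` of `Fin n` preserves the zero-sum condition, because the value sums
of a multiset and of its reflection add up to `n (n - 1)`. Hence `T_n` has the parity of the
number of reflection-invariant zero-sum multisets. A reflection-invariant multiset of size `n`
has value sum `n (n - 1) / 2`: for even `n` this is never `0` mod `n`; for odd `n = 2 m + 1` it
always is, and folding `Fin (2 m + 1)` about its midpoint identifies these multisets with
`Sym (Option (Fin m)) m`, of cardinality `(2 m).choose m`, which is even for `m ≥ 1`.
-/

open Function

theorem Function.Involutive.even_card_iff_even_card_fixedPoints {α : Type*} [Finite α]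
    {f : α → α} (hf : Involutive f) : Even (Nat.card α) ↔ Even (Nat.card (fixedPoints f)) := by
  classical
  have := Fintype.ofFinite α
  have h := Equiv.Perm.card_fixedPoints_modEq (f := (f : Function.End α)) (p := 2) (n := 1)
    (funext hf)
  simp only [Nat.card_eq_fintype_card, Nat.even_iff]
  exact Iff.of_eq (congrArg (· = 0) h)

theorem Sym.map_eq_self_iff_count {α : Type*} [DecidableEq α] {k : ℕ} {ρ : α → α}
    (hρ : Involutive ρ) (s : Sym α k) :
    s.map ρ = s ↔ ∀ x, (s : Multiset α).count (ρ x) = (s : Multiset α).count x := by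
  rw [← Sym.coe_inj, Sym.coe_map]
  constructor
  · intro h x
    conv_lhs => rw [← h]
    exact Multiset.count_map_eq_count' ρ _ hρ.injective x
  · intro h
    ext x
    nth_rw 1 [← hρ x]
    rw [Multiset.count_map_eq_count' ρ _ hρ.injective, h]

def Sym.invariantEquivCounts {α : Type*} [DecidableEq α] [Fintype α] (k : ℕ) {ρ : α → α}
    (hρ : Involutive ρ) :
    {s : Sym α k // s.map ρ = s} ≃ {f : α → ℕ // (∑ x, f x = k) ∧ ∀ x, f (ρ x) = f x} :=
  (Equiv.subtypeEquiv (Sym.equivNatSumOfFintype α k) fun s => by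
      simp only [Sym.map_eq_self_iff_count hρ, Sym.coe_equivNatSumOfFintype_apply_apply]).trans
    (Equiv.subtypeSubtypeEquivSubtypeInter _ _)

def Sym.invariantEquivOfSemiconj {α β : Type*} {k : ℕ} (e : α ≃ β) {ρ : α → α} {σ : β → β}
    (h : Semiconj e ρ σ) : {s : Sym α k // s.map ρ = s} ≃ {t : Sym β k // t.map σ = t} :=
  Equiv.subtypeEquiv (Sym.equivCongr e) fun s => by
    have hcomm : Sym.map σ (Sym.map e s) = Sym.map e (Sym.map ρ s) := by
      rw [Sym.map_map, Sym.map_map, h.comp_eq]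
    simp only [Sym.equivCongr_apply, hcomm]
    exact (Sym.map_injective e.injective _).eq_iff.symm

theorem Fintype.sum_option_sum_of_swap_invariant {β M : Type*} [Fintype β] [AddCommMonoid M]
    {f : Option (β ⊕ β) → M} (hf : ∀ x, f (Option.map Sum.swap x) = f x) :
    ∑ x, f x = f none + 2 • ∑ b, f (some (Sum.inl b)) := by
  have hinr : ∀ b, f (some (Sum.inr b)) = f (some (Sum.inl b)) := fun b => hf (some (Sum.inl b))
  rw [Fintype.sum_option, Fintype.sum_sum_type, two_nsmul]
  simp only [hinr]

/-- The multiplicity of `none` is odd; halving it is the bijection. -/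
def swapInvariantCountsEquiv (β : Type*) [Fintype β] (j : ℕ) :
    {f : Option (β ⊕ β) → ℕ // (∑ x, f x = 2 * j + 1) ∧ ∀ x, f (Option.map Sum.swap x) = f x}
      ≃ {h : Option β → ℕ // ∑ o, h o = j} where
  toFun f := ⟨fun o => o.elim (f.1 none / 2) fun b => f.1 (some (Sum.inl b)), by
    have := Fintype.sum_option_sum_of_swap_invariant f.2.2
    rw [f.2.1, smul_eq_mul] at this
    rw [Fintype.sum_option]
    simp only [Option.elim_none, Option.elim_some]
    omega⟩
  invFun h := ⟨fun o => o.elim (2 * h.1 none + 1) fun x => h.1 (some (x.elim id id)), by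
    refine ⟨?_, fun o => ?_⟩
    · have := h.2
      rw [Fintype.sum_option] at this
      rw [Fintype.sum_option_sum_of_swap_invariant, smul_eq_mul]
      · simp only [Option.elim_none, Option.elim_some, Sum.elim_inl, id_eq]
        omega
      · rintro (_ | _ | _) <;> rfl
    · rcases o with _ | _ | _ <;> rfl⟩
  left_inv f := by
    obtain ⟨f, hsum, hinv⟩ := f
    have := Fintype.sum_option_sum_of_swap_invariant hinv
    rw [hsum, smul_eq_mul] at this
    ext (_ | b | b)
    · simp only [Option.elim_none]
      omega
    · rfl
    · exact hinv (some (Sum.inr b))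
  right_inv h := by
    ext (_ | b)
    · simp only [Option.elim_none]
      omega
    · rfl

/-- Folds `Fin (2 m + 1)` about its midpoint `m`, which is sent to `none`. -/
def finOddEquiv (m : ℕ) : Fin (2 * m + 1) ≃ Option (Fin m ⊕ Fin m) where
  toFun x :=
    if h : x.val < m then some (Sum.inl ⟨x, h⟩)
    else if h' : x.val = m then none else some (Sum.inr ⟨2 * m - x, by omega⟩)
  invFun
    | none => ⟨m, by omega⟩
    | some (Sum.inl i) => ⟨i, by omega⟩
    | some (Sum.inr i) => ⟨2 * m - i, by omega⟩
  left_inv x := by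
    dsimp only
    split_ifs with h h'
    · rfl
    · exact Fin.ext h'.symm
    · ext
      simp only
      omega
  right_inv := by
    rintro (_ | i | i)
    · simp
    · simp
    · have := i.isLt
      simp only
      rw [dif_neg (by omega), dif_neg (by omega)]
      congr
      omega

theorem finOddEquiv_semiconj_rev (m : ℕ) :
    Semiconj (finOddEquiv m) Fin.rev (Option.map Sum.swap) := by
  intro x
  have := x.isLt
  simp only [finOddEquiv, Equiv.coe_fn_mk, Fin.val_rev]
  split_ifs <;> simp only [Option.map_some, Option.map_none, Sum.swap_inl, Sum.swap_inr,
    reduceCtorEq, Option.some.injEq, Sum.inl.injEq, Sum.inr.injEq, Fin.ext_iff] <;> omega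

theorem Option.map_swap_involutive (β : Type*) :
    Involutive (Option.map (Sum.swap : β ⊕ β → β ⊕ β)) := by
  rintro (_ | _ | _) <;> rfl

theorem Sym.card_fin_rev_invariant (m : ℕ) :
    Nat.card {s : Sym (Fin (2 * m + 1)) (2 * m + 1) // s.map Fin.rev = s} = m.centralBinom := by
  rw [Nat.card_congr (((Sym.invariantEquivOfSemiconj _ (finOddEquiv_semiconj_rev m)).trans
      (Sym.invariantEquivCounts _ (Option.map_swap_involutive _))).trans
      ((swapInvariantCountsEquiv (Fin m) m).trans (Sym.equivNatSumOfFintype _ m).symm)),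
    Nat.card_eq_fintype_card, Sym.card_sym_eq_choose, Nat.centralBinom_eq_two_mul_choose]
  simp only [Fintype.card_option, Fintype.card_fin]
  congr 1
  omega

theorem Fin.sum_val_map_rev_add {n : ℕ} (s : Multiset (Fin n)) :
    ((s.map Fin.rev).map Fin.val).sum + (s.map Fin.val).sum = Multiset.card s * (n - 1) := by
  have hpair : ∀ x ∈ s, (Fin.val ∘ Fin.rev) x + x.val = n - 1 := fun x _ => by
    have := x.isLt
    rw [Function.comp_apply, Fin.val_rev]
    omega
  rw [Multiset.map_map, ← Multiset.sum_map_add, Multiset.map_congr rfl hpair,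
    Multiset.map_const', Multiset.sum_replicate, smul_eq_mul]

theorem Fin.two_mul_sum_val_of_map_rev_eq {n : ℕ} {s : Multiset (Fin n)} (hs : s.map Fin.rev = s) :
    2 * (s.map Fin.val).sum = Multiset.card s * (n - 1) := by
  have hsum := Fin.sum_val_map_rev_add s
  rw [hs] at hsum
  omega

abbrev ZeroSumSym (n : ℕ) : Type :=
  {s : Sym (Fin n) n // ((s : Multiset (Fin n)).map Fin.val).sum % n = 0}

namespace ZeroSumSym

variable {n : ℕ}

def reflect (s : ZeroSumSym n) : ZeroSumSym n :=
  ⟨s.1.map Fin.rev, by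
    have hsum := Fin.sum_val_map_rev_add (s.1 : Multiset (Fin n))
    rw [Sym.coe_map]
    rw [Sym.card_coe] at hsum
    exact Nat.mod_eq_zero_of_dvd <|
      (Nat.dvd_add_left (Nat.dvd_of_mod_eq_zero s.2)).mp (hsum ▸ dvd_mul_right n (n - 1))⟩

theorem reflect_involutive : Involutive (reflect (n := n)) := fun s =>
  Subtype.ext <| by simp only [reflect, Sym.map_map, Fin.rev_involutive.comp_self, Sym.map_id]

theorem fixedPoints_reflect_eq_empty (hn : 0 < n) (he : Even n) :
    fixedPoints (reflect (n := n)) = ∅ := by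
  refine Set.eq_empty_of_forall_notMem fun s hs => ?_
  obtain ⟨c, hc⟩ := Nat.dvd_of_mod_eq_zero s.2
  have h := Fin.two_mul_sum_val_of_map_rev_eq (s := (s.1 : Multiset (Fin n)))
    (by rw [← Sym.coe_map]; exact congrArg (fun t : ZeroSumSym n => (t.1 : Multiset (Fin n))) hs)
  rw [hc, Sym.card_coe, mul_left_comm] at h
  have := Nat.eq_of_mul_eq_mul_left hn h
  obtain ⟨k, rfl⟩ := he
  omega

/-- For odd `n = 2 m + 1`, every `Fin.rev`-invariant multiset has value sum `n m ≡ 0`. -/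
def fixedPointsReflectEquiv (m : ℕ) :
    fixedPoints (reflect (n := 2 * m + 1)) ≃
      {s : Sym (Fin (2 * m + 1)) (2 * m + 1) // s.map Fin.rev = s} where
  toFun s := ⟨s.1.1, congrArg Subtype.val s.2⟩
  invFun s := ⟨⟨s.1, by
      have h := Fin.two_mul_sum_val_of_map_rev_eq (s := (s.1 : Multiset (Fin (2 * m + 1))))
        (by rw [← Sym.coe_map, s.2])
      rw [Sym.card_coe, Nat.add_sub_cancel] at h
      have hm : ((s.1 : Multiset (Fin (2 * m + 1))).map Fin.val).sum = (2 * m + 1) * m := by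
        linarith
      rw [hm, Nat.mul_mod_right]⟩, Subtype.ext s.2⟩
  left_inv _ := rfl
  right_inv _ := rfl

end ZeroSumSym

theorem treeT_even (n : ℕ) (hn : 2 ≤ n) : Even (planeTreeT n) := by
  change Even (Nat.card (ZeroSumSym n))
  rw [ZeroSumSym.reflect_involutive.even_card_iff_even_card_fixedPoints]
  rcases Nat.even_or_odd' n with ⟨m, rfl | rfl⟩
  · rw [ZeroSumSym.fixedPoints_reflect_eq_empty (by omega) (even_two_mul m)]
    simp
  · rw [Nat.card_congr (ZeroSumSym.fixedPointsReflectEquiv m), Sym.card_fin_rev_invariant]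
    exact even_iff_two_dvd.mpr (Nat.two_dvd_centralBinom_of_one_le (by omega))
end
end

section
/- The sequence a*_n = 2·T_n / 4^n, where T_n = (1/n)·sum_{d|n} binomial(2d-1,d)·φ(n/d), satisfies a*_n ~ 1/(√π · n^{3/2}) as n → ∞; in particular, a*_n is regularly varying with index −3/2. -/
open Finset Filter Topology

noncomputable section

/-! Walkup's sum is dominated by its term `d = n`, which is `C(2n-1, n) = centralBinom n / 2`:
every other divisor has `2d ≤ n`, so the remaining terms add up to at most `n² 2ⁿ`, negligible
against `centralBinom n ≥ 4ⁿ / (2n)`. Stirling's formula gives `centralBinom n ~ 4ⁿ / √(πn)`,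
hence `2 T_n / 4ⁿ ~ 1 / (√π n^{3/2})`, and any sequence asymptotic to a multiple of `n^γ` is
regularly varying with index `γ`. -/

open Nat Real Asymptotics

theorem Nat.two_mul_choose_two_mul_sub_one {n : ℕ} (hn : n ≠ 0) :
    2 * (2 * n - 1).choose n = centralBinom n := by
  obtain ⟨m, rfl⟩ := exists_eq_add_one_of_ne_zero hn
  have h : centralBinom (m + 1) = (2 * m + 1).choose m + (2 * m + 1).choose (m + 1) :=
    choose_succ_succ _ _
  rw [h, show 2 * (m + 1) - 1 = 2 * m + 1 by omega, choose_symm_half]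
  ring

theorem Nat.two_mul_le_of_mem_properDivisors {n d : ℕ} (hd : d ∈ n.properDivisors) :
    2 * d ≤ n := by
  obtain ⟨hdvd, hlt⟩ := mem_properDivisors.mp hd
  have : d ≤ n - d := le_of_dvd (by omega) (Nat.dvd_sub hdvd dvd_rfl)
  omega

theorem Nat.centralBinom_isEquivalent :
    (fun n : ℕ => (centralBinom n : ℝ)) ~[atTop] fun n => 4 ^ n / √(π * n) := by
  have h2n : Tendsto (fun n : ℕ => 2 * n) atTop atTop := tendsto_id.const_mul_atTop' two_pos
  have h := (Stirling.factorial_isEquivalent_stirling.comp_tendsto h2n).div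
    (Stirling.factorial_isEquivalent_stirling.mul Stirling.factorial_isEquivalent_stirling)
  refine (h.congr_left ?_).congr_right ?_
  · filter_upwards with n
    simp [centralBinom_eq_two_mul_choose, cast_choose ℝ (show n ≤ 2 * n by omega),
      show 2 * n - n = n by omega]
  · filter_upwards [eventually_ne_atTop 0] with n hn
    have hsqrt : √(2 * ↑(2 * n) * π) = 2 * √(π * n) := by
      rw [show 2 * ((2 * n : ℕ) : ℝ) * π = 2 ^ 2 * (π * n) by push_cast; ring,
        sqrt_mul (by positivity), sqrt_sq zero_le_two]
    have hsqrt_sq : √(2 * n * π) * √(2 * n * π) = 2 * √(π * n) ^ 2 := by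
      rw [mul_self_sqrt (by positivity), sq_sqrt (by positivity)]
      ring
    have hpow : (((2 * n : ℕ) : ℝ) / exp 1) ^ (2 * n)
        = 4 ^ n * ((n / exp 1) ^ n * (n / exp 1) ^ n) := by
      rw [pow_mul, ← mul_pow]
      push_cast
      ring
    simp only [Pi.div_apply, Pi.mul_apply, Function.comp_apply]
    rw [hsqrt, hpow, mul_mul_mul_comm (√(2 * n * π)), hsqrt_sq]
    field_simp

def walkupSum (n : ℕ) : ℕ := ∑ d ∈ n.divisors, (2 * d - 1).choose d * φ (n / d)

theorem walkupSum_eq_choose_add {n : ℕ} (hn : n ≠ 0) :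
    walkupSum n =
      (2 * n - 1).choose n + ∑ d ∈ n.properDivisors, (2 * d - 1).choose d * φ (n / d) := by
  rw [walkupSum, ← cons_self_properDivisors hn, sum_cons, Nat.div_self (pos_of_ne_zero hn),
    totient_one, mul_one]

theorem sum_properDivisors_choose_mul_totient_le (n : ℕ) :
    ∑ d ∈ n.properDivisors, (2 * d - 1).choose d * φ (n / d) ≤ n ^ 2 * 2 ^ n :=
  calc ∑ d ∈ n.properDivisors, (2 * d - 1).choose d * φ (n / d)
      ≤ ∑ d ∈ n.properDivisors, 2 ^ n * n := by
        gcongr with d hd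
        · have := two_mul_le_of_mem_properDivisors hd
          exact (choose_le_two_pow _ _).trans (pow_le_pow_right₀ one_le_two (by omega))
        · exact (totient_le _).trans (div_le_self _ _)
    _ ≤ n * (2 ^ n * n) := by
        rw [sum_const, smul_eq_mul]
        gcongr
        exact (card_le_card properDivisors_subset_divisors).trans (card_divisors_le_self n)
    _ = n ^ 2 * 2 ^ n := by ring

theorem abs_two_mul_mul_walkupT_sub_centralBinom_le {n : ℕ} (hn : n ≠ 0) :
    |2 * n * (walkupT n : ℝ) - centralBinom n| ≤ 4 * (n ^ 2 * 2 ^ n) := by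
  -- `walkupT n = walkupSum n / n` rounds down, by less than `1`.
  have hlow : n * walkupT n ≤ walkupSum n := by
    rw [mul_comm]
    exact div_mul_le_self _ _
  have hup : walkupSum n < n * walkupT n + n := by
    rw [mul_comm]
    exact lt_div_mul_add (pos_of_ne_zero hn)
  have hsum := walkupSum_eq_choose_add hn
  have herr := sum_properDivisors_choose_mul_totient_le n
  generalize ∑ d ∈ n.properDivisors, (2 * d - 1).choose d * φ (n / d) = E at hsum herr
  have hcb := two_mul_choose_two_mul_sub_one hn
  have hn_le : n ≤ n ^ 2 * 2 ^ n :=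
    (le_self_pow₀ (one_le_iff_ne_zero.mpr hn) two_ne_zero).trans
      (le_mul_of_one_le_right' Nat.one_le_two_pow)
  have hlow' : (n : ℝ) * walkupT n ≤ walkupSum n := by exact_mod_cast hlow
  have hup' : (walkupSum n : ℝ) < n * walkupT n + n := by exact_mod_cast hup
  have hsum' : (walkupSum n : ℝ) = (2 * n - 1).choose n + E := by exact_mod_cast hsum
  have herr' : (E : ℝ) ≤ n ^ 2 * 2 ^ n := by exact_mod_cast herr
  have hcb' : 2 * ((2 * n - 1).choose n : ℝ) = centralBinom n := by exact_mod_cast hcb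
  have hn_le' : (n : ℝ) ≤ n ^ 2 * 2 ^ n := by exact_mod_cast hn_le
  have hE : (0 : ℝ) ≤ E := E.cast_nonneg
  rw [abs_sub_le_iff]
  constructor <;> linarith

theorem two_mul_mul_walkupT_isEquivalent_centralBinom :
    (fun n : ℕ => 2 * n * (walkupT n : ℝ)) ~[atTop] fun n => (centralBinom n : ℝ) := by
  have herr : (fun n : ℕ => 2 * n * (walkupT n : ℝ) - centralBinom n) =O[atTop]
      fun n : ℕ => (n : ℝ) ^ 2 * 2 ^ n := by
    refine IsBigO.of_bound 4 ?_
    filter_upwards [eventually_ne_atTop 0] with n hn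
    rw [norm_eq_abs, norm_of_nonneg (by positivity)]
    exact abs_two_mul_mul_walkupT_sub_centralBinom_le hn
  have hsmall : (fun n : ℕ => (n : ℝ) ^ 2 * 2 ^ n) =o[atTop] fun n : ℕ => (4 : ℝ) ^ n / n := by
    have h := (isLittleO_pow_const_const_pow_of_one_lt (R := ℝ) 3 one_lt_two).mul_isBigO
      (isBigO_refl (fun n : ℕ => (2 : ℝ) ^ n / n) atTop)
    refine h.congr' ?_ ?_ <;> filter_upwards [eventually_ne_atTop 0] with n hn
    · field_simp
    · rw [← mul_div_assoc, ← mul_pow]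
      norm_num
  have hcb : (fun n : ℕ => (4 : ℝ) ^ n / n) =O[atTop] fun n => (centralBinom n : ℝ) := by
    refine IsBigO.of_bound 2 ?_
    filter_upwards [eventually_ne_atTop 0] with n hn
    rw [norm_of_nonneg (by positivity), norm_of_nonneg (by positivity),
      div_le_iff₀ (by positivity)]
    exact_mod_cast (four_pow_le_two_mul_self_mul_centralBinom n (pos_of_ne_zero hn)).trans_eq
      (by ring)
  exact herr.trans_isLittleO (hsmall.trans_isBigO hcb)

theorem two_mul_walkupT_div_four_pow_isEquivalent :
    (fun n : ℕ => 2 * (walkupT n : ℝ) / 4 ^ n) ~[atTop]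
      fun n => (√π)⁻¹ * (n : ℝ) ^ (-(3 / 2 : ℝ)) := by
  have h := (two_mul_mul_walkupT_isEquivalent_centralBinom.trans centralBinom_isEquivalent).div
    (IsEquivalent.refl (u := fun n : ℕ => (n : ℝ) * 4 ^ n))
  refine (h.congr_left ?_).congr_right ?_ <;> filter_upwards [eventually_ne_atTop 0] with n hn
  · rw [Pi.div_apply]
    field_simp
  · have hn' : (0 : ℝ) < n := by positivity
    rw [Pi.div_apply, rpow_neg hn'.le, show (3 / 2 : ℝ) = 1 + 1 / 2 by norm_num, rpow_add hn',
      rpow_one, ← sqrt_eq_rpow, sqrt_mul pi_pos.le]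
    field_simp

def RegularlyVarying (f : ℕ → ℝ) (γ : ℝ) : Prop :=
  ∀ x : ℝ, 0 < x → Tendsto (fun n : ℕ => f ⌊x * n⌋₊ / f n) atTop (𝓝 (x ^ γ))

theorem Asymptotics.IsEquivalent.regularlyVarying {f : ℕ → ℝ} {c γ : ℝ}
    (h : f ~[atTop] fun n => c * (n : ℝ) ^ γ) (hc : c ≠ 0) : RegularlyVarying f γ := by
  intro x hx
  have hfloor : Tendsto (fun n : ℕ => ⌊x * n⌋₊) atTop atTop :=
    tendsto_nat_floor_atTop.comp (tendsto_natCast_atTop_atTop.const_mul_atTop hx)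
  have hfloor_div : Tendsto (fun n : ℕ => (⌊x * n⌋₊ : ℝ) / n) atTop (𝓝 x) :=
    (tendsto_nat_floor_mul_div_atTop hx.le).comp tendsto_natCast_atTop_atTop
  have hratio := ((h.comp_tendsto hfloor).div h).symm
  refine hratio.tendsto_nhds ((hfloor_div.rpow_const (Or.inl hx.ne')).congr' ?_)
  filter_upwards [eventually_ne_atTop 0] with n hn
  simp only [Pi.div_apply, Function.comp_apply]
  rw [div_rpow (by positivity) (by positivity)]
  field_simp

theorem astar_asymptotics :
    Tendsto (fun n : ℕ =>
        (2 * (walkupT n : ℝ) / 4 ^ n) * (Real.sqrt Real.pi * (n : ℝ) ^ ((3 : ℝ) / 2)))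
      atTop (nhds 1) ∧
    ∀ x : ℝ, 0 < x →
      Tendsto (fun n : ℕ =>
          (2 * (walkupT ⌊x * n⌋₊ : ℝ) / 4 ^ ⌊x * n⌋₊) / (2 * (walkupT n : ℝ) / 4 ^ n))
        atTop (nhds (Real.rpow x (-(3 : ℝ) / 2))) := by
  have h := two_mul_walkupT_div_four_pow_isEquivalent
  refine ⟨?_, by rw [neg_div]; exact h.regularlyVarying (by positivity)⟩
  have hne : ∀ᶠ n : ℕ in atTop, (√π)⁻¹ * (n : ℝ) ^ (-(3 / 2 : ℝ)) ≠ 0 := by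
    filter_upwards [eventually_ne_atTop 0] with n hn
    positivity
  refine ((isEquivalent_iff_tendsto_one hne).mp h).congr' ?_
  filter_upwards with n
  rw [Pi.div_apply, rpow_neg n.cast_nonneg, div_eq_mul_inv, mul_inv, inv_inv, inv_inv]
end
end
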